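/- arXiv:2109.13884 — 9 statements merged into one kernel-verified Lean document; each statement's English description precedes it below -/
import Mathlib

section
/- Let Γ be a finite edge-regular graph with parameters (v, k, λ) admitting a partition H_1, …, H_{v/a} of its vertex set into perfect 1-codes each of size a, where a = λ + 2. Form the graph F(Γ) by adding all edges within each H_i. Then each H_i is a 1-regular clique of size λ+2 in F(Γ), and F(Γ) is edge-regular with parameters (v, k + λ + 1, λ). -/
/-- `C` is a perfect 1-code in `G`. -/
def IsPerfectOneCode {V : Type*} (G : SimpleGraph V) (C : Set V) : Prop :=
  ∀ v, ∃! c, c ∈ C ∧ (c = v ∨ G.Adj c v)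

/-- `S` is a `1`-regular clique in `G`. -/
def IsOneRegularClique {V : Type*} (G : SimpleGraph V) (S : Set V) : Prop :=
  G.IsClique S ∧ ∀ x ∉ S, ∃! c, c ∈ S ∧ G.Adj x c

/-- `G` is edge-regular with parameters `(v, k, l)`. -/
def IsEdgeRegular {V : Type*} (G : SimpleGraph V) (v k l : ℕ) : Prop :=
  Nat.card V = v ∧ (∀ x, (G.neighborSet x).ncard = k) ∧ G ≠ ⊥ ∧
    ∀ x y, G.Adj x y → (G.commonNeighbors x y).ncard = l

theorem stmt3 {V : Type*} [Fintype V] (G : SimpleGraph V) (v k l a : ℕ)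
    (hER : IsEdgeRegular G v k l) (ha : a = l + 2)
    (ι : Type*) (H : ι → Set V)
    (hcode : ∀ i, IsPerfectOneCode G (H i))
    (hsize : ∀ i, (H i).ncard = a)
    (hdisj : Pairwise fun i j => Disjoint (H i) (H j))
    (hcover : (⋃ i, H i) = Set.univ)
    -- `F` is the graph obtained from `G` by adding all edges inside each `H i`
    (F : SimpleGraph V)
    (hF : ∀ x y, F.Adj x y ↔ (G.Adj x y ∨ (x ≠ y ∧ ∃ i, x ∈ H i ∧ y ∈ H i))) :
    (∀ i, IsOneRegularClique F (H i) ∧ (H i).ncard = l + 2) ∧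
    IsEdgeRegular F v (k + l + 1) l := by
  classical
  obtain ⟨hv, hk, hgne, hl⟩ := hER
  -- each part is independent in G
  have ind : ∀ i, ∀ x ∈ H i, ∀ y ∈ H i, ¬ G.Adj x y := by
    intro i x hx y hy hadj
    obtain ⟨c, _, huniq⟩ := hcode i x
    have h1 : y = c := huniq y ⟨hy, Or.inr hadj.symm⟩
    have h2 : x = c := huniq x ⟨hx, Or.inl rfl⟩
    exact G.irrefl (h2 ▸ h1 ▸ hadj)
  -- unique part membership
  have memuniq : ∀ {x : V} {i j : ι}, x ∈ H i → x ∈ H j → i = j := by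
    intro x i j hi hj
    by_contra hij
    exact (hdisj hij).le_bot ⟨hi, hj⟩
  have memex : ∀ x : V, ∃ i, x ∈ H i := by
    intro x
    have : x ∈ ⋃ i, H i := hcover.symm ▸ Set.mem_univ x
    exact Set.mem_iUnion.mp this
  -- unique G-neighbor in a part for outsiders
  have uniqnbr : ∀ (i : ι) (x : V), x ∉ H i → ∃! c, c ∈ H i ∧ G.Adj x c := by
    intro i x hx
    obtain ⟨c, ⟨hc, hcx⟩, huniq⟩ := hcode i x
    rcases hcx with rfl | hadj
    · exact absurd hc hx
    · exact ⟨c, ⟨hc, hadj.symm⟩, fun d ⟨hd, hdx⟩ => huniq d ⟨hd, Or.inr hdx.symm⟩⟩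
  -- F-neighborhoods
  have nbr : ∀ (x : V) (i : ι), x ∈ H i →
      F.neighborSet x = G.neighborSet x ∪ (H i \ {x}) := by
    intro x i hx
    ext z
    simp only [SimpleGraph.mem_neighborSet, hF, Set.mem_union, Set.mem_diff,
      Set.mem_singleton_iff]
    constructor
    · rintro (h | ⟨hne, m, hxm, hzm⟩)
      · exact Or.inl h
      · exact Or.inr ⟨(memuniq hxm hx) ▸ hzm, fun hzx => hne hzx.symm⟩
    · rintro (h | ⟨hz, hne⟩)
      · exact Or.inl h
      · exact Or.inr ⟨fun h => hne h.symm, i, hx, hz⟩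
  have ndisj : ∀ (x : V) (i : ι), x ∈ H i →
      Disjoint (G.neighborSet x) (H i \ {x}) := by
    intro x i hx
    rw [Set.disjoint_left]
    rintro z hz ⟨hzi, _⟩
    exact ind i x hx z hzi hz
  have deg : ∀ x, (F.neighborSet x).ncard = k + l + 1 := by
    intro x
    obtain ⟨i, hi⟩ := memex x
    rw [nbr x i hi, Set.ncard_union_eq (ndisj x i hi) (Set.toFinite _) (Set.toFinite _),
      hk, Set.ncard_diff_singleton_of_mem hi, hsize i, ha]
    omega
  -- cross adjacency
  have cross : ∀ {x y : V} {i j : ι}, x ∈ H i → y ∈ H j → i ≠ j →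
      (F.Adj x y ↔ G.Adj x y) := by
    intro x y i j hx hy hij
    rw [hF]
    constructor
    · rintro (h | ⟨_, m, hxm, hym⟩)
      · exact h
      · exact absurd ((memuniq hxm hx).symm.trans (memuniq hym hy)) hij
    · exact Or.inl
  refine ⟨?_, hv, deg, ?_, ?_⟩
  · -- 1-regular cliques
    intro i
    refine ⟨⟨?_, ?_⟩, ha ▸ hsize i⟩
    · intro x hx y hy hne
      exact (hF x y).mpr (Or.inr ⟨hne, i, hx, hy⟩)
    · intro x hx
      obtain ⟨j, hj⟩ := memex x
      have hji : j ≠ i := fun h => hx (h ▸ hj)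
      obtain ⟨c, ⟨hc, hadj⟩, hu⟩ := uniqnbr i x hx
      refine ⟨c, ⟨hc, (cross hj hc hji).mpr hadj⟩, ?_⟩
      rintro d ⟨hd, hdadj⟩
      exact hu d ⟨hd, (cross hj hd hji).mp hdadj⟩
  · -- F ≠ ⊥
    obtain ⟨x, y, hxy⟩ : ∃ x y, G.Adj x y := by
      by_contra h
      push_neg at h
      exact hgne (by ext x y; simp [h x y])
    intro hbot
    have : F.Adj x y := (hF x y).mpr (Or.inl hxy)
    rw [hbot] at this
    exact this
  · -- common neighbors
    intro x y hxy
    obtain ⟨i, hi⟩ := memex x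
    obtain ⟨j, hj⟩ := memex y
    rw [hF] at hxy
    rcases hxy with hadj | ⟨hne, m, hxm, hym⟩
    · -- G-edge: different parts
      have hij : i ≠ j := by
        intro h
        exact ind j x (h ▸ hi) y hj hadj
      have hxj : x ∉ H j := fun h => hij (memuniq hi h)
      have hyi : y ∉ H i := fun h => hij ((memuniq h hj).symm ▸ rfl)
      have key : F.commonNeighbors x y = G.commonNeighbors x y := by
        unfold SimpleGraph.commonNeighbors
        rw [nbr x i hi, nbr y j hj]
        ext z
        simp only [Set.mem_inter_iff, Set.mem_union, Set.mem_diff,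
          Set.mem_singleton_iff, SimpleGraph.mem_neighborSet]
        constructor
        · rintro ⟨hx' | ⟨hzi, hzx⟩, hy' | ⟨hzj, hzy⟩⟩
          · exact ⟨hx', hy'⟩
          · -- z ∈ H j, G.Adj x z, contradiction with uniqueness via y
            exfalso
            obtain ⟨c, _, hu⟩ := uniqnbr j x hxj
            have h1 := hu z ⟨hzj, hx'⟩
            have h2 := hu y ⟨hj, hadj⟩
            exact hzy (h1.trans h2.symm)
          · exfalso
            obtain ⟨c, _, hu⟩ := uniqnbr i y hyi
            have h1 := hu z ⟨hzi, hy'⟩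
            have h2 := hu x ⟨hi, hadj.symm⟩
            exact hzx (h1.trans h2.symm)
          · exact absurd (memuniq hzi hzj) hij
        · rintro ⟨h1, h2⟩
          exact ⟨Or.inl h1, Or.inl h2⟩
      rw [key]
      exact hl x y hadj
    · -- same part
      have hgxy : ¬ G.Adj x y := ind m x hxm y hym
      have key : F.commonNeighbors x y = H m \ {x, y} := by
        unfold SimpleGraph.commonNeighbors
        rw [nbr x m hxm, nbr y m hym]
        ext z
        simp only [Set.mem_inter_iff, Set.mem_union, Set.mem_diff,
          Set.mem_singleton_iff, Set.mem_insert_iff, SimpleGraph.mem_neighborSet]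
        constructor
        · rintro ⟨hx' | ⟨hzm, hzx⟩, hy' | ⟨hzm', hzy⟩⟩
          · exfalso
            obtain ⟨p, hp⟩ := memex z
            by_cases hpm : p = m
            · exact ind m z (hpm ▸ hp) x hxm hx'.symm
            · have hzn : z ∉ H m := fun h => hpm (memuniq hp h)
              obtain ⟨c, _, hu⟩ := uniqnbr m z hzn
              have h1 := hu x ⟨hxm, hx'.symm⟩
              have h2 := hu y ⟨hym, hy'.symm⟩
              exact hne (h1.trans h2.symm)
          · exact absurd hx' (ind m x hxm z hzm')
          · exact absurd hy' (ind m y hym z hzm)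
          · exact ⟨hzm, fun h => h.elim hzx hzy⟩
        · rintro ⟨hzm, hz⟩
          push_neg at hz
          exact ⟨Or.inr ⟨hzm, hz.1⟩, Or.inr ⟨hzm, hz.2⟩⟩
      rw [key, Set.ncard_diff (by rintro z (rfl | rfl); exacts [hxm, hym]),
        hsize m, ha, Set.ncard_pair hne]
      omega
end

section
/- Let Γ^(1), …, Γ^(t) be finite edge-regular graphs, each with parameters (v, k, λ), each admitting a partition of its vertex set into v/a perfect 1-codes of size a, where a properly divides λ + 2 and t = (λ+2)/a. Let Π = (π_2, …, π_t) be permutations of {1, …, v/a}. Construct F_Π by taking the disjoint union of the Γ^(ℓ) and, for each i, adding all edges among H^(1)_i ∪ H^(2)_{π_2(i)} ∪ … ∪ H^(t)_{π_t(i)}. Then each set H^(1)_i ∪ H^(2)_{π_2(i)} ∪ … ∪ H^(t)_{π_t(i)} is a 1-regular clique of size λ+2 in F_Π, and F_Π is edge-regular with parameters (vt, k + λ + 1, λ). -/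
private lemma ncard_layered {V : Type*} [Fintype V] {t : ℕ} (S : Set (V × Fin t))
    (s : Fin t → Set V) (h : ∀ z n, ((z, n) ∈ S ↔ z ∈ s n)) :
    S.ncard = ∑ n, (s n).ncard := by
  classical
  have e : S ≃ (n : Fin t) × (s n) :=
    { toFun := fun x => ⟨x.1.2, ⟨x.1.1, (h x.1.1 x.1.2).1 x.2⟩⟩
      invFun := fun x => ⟨(x.2.1, x.1), (h x.2.1 x.1).2 x.2.2⟩
      left_inv := fun x => rfl
      right_inv := fun x => rfl }
  haveI : ∀ n, Fintype (s n) := fun n => Fintype.ofFinite _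
  haveI : Fintype S := Fintype.ofFinite _
  rw [← Nat.card_coe_set_eq, Nat.card_congr e, Nat.card_eq_fintype_card,
    Fintype.card_sigma]
  exact Finset.sum_congr rfl fun n _ => by
    rw [← Nat.card_coe_set_eq, Nat.card_eq_fintype_card]

theorem stmt4 {V : Type*} [Fintype V] (v k l a t : ℕ) (ht : 0 < t)
    (Γ : Fin t → SimpleGraph V)
    (hER : ∀ ℓ, IsEdgeRegular (Γ ℓ) v k l)
    (hproper : a ∣ l + 2) (hne : a ≠ l + 2) (hta : a * t = l + 2)
    (ι : Type*) [Fintype ι] (hι : Fintype.card ι * a = v)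
    (H : (ℓ : Fin t) → ι → Set V)
    (hcode : ∀ ℓ i, IsPerfectOneCode (Γ ℓ) (H ℓ i))
    (hsize : ∀ ℓ i, (H ℓ i).ncard = a)
    (hdisj : ∀ ℓ, Pairwise fun i j => Disjoint (H ℓ i) (H ℓ j))
    (hcover : ∀ ℓ, (⋃ i, H ℓ i) = Set.univ)
    (π : Fin t → Equiv.Perm ι) (hπ0 : π ⟨0, ht⟩ = 1)
    -- `F` is the disjoint union of the `Γ ℓ` (modelled on `V × Fin t`), together with
    -- all edges inside each set `H 0 i ∪ H 1 (π 1 i) ∪ … ∪ H (t-1) (π (t-1) i)`.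
    (F : SimpleGraph (V × Fin t))
    (hF : ∀ p q : V × Fin t, F.Adj p q ↔ (p ≠ q ∧
      ((p.2 = q.2 ∧ (Γ p.2).Adj p.1 q.1) ∨
        ∃ i, p.1 ∈ H p.2 (π p.2 i) ∧ q.1 ∈ H q.2 (π q.2 i)))) :
    (∀ i : ι,
      IsOneRegularClique F {p : V × Fin t | p.1 ∈ H p.2 (π p.2 i)} ∧
      ({p : V × Fin t | p.1 ∈ H p.2 (π p.2 i)}).ncard = l + 2) ∧
    IsEdgeRegular F (v * t) (k + l + 1) l := by
  classical
  have ha : 1 ≤ a := by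
    rcases Nat.eq_zero_or_pos a with h | h
    · subst h; simp at hta
    · exact h
  have ht2 : 2 ≤ t := by
    by_contra h
    push_neg at h
    interval_cases t
    rw [mul_one] at hta
    exact hne hta
  have htA : t * a = l + 2 := by rw [mul_comm]; exact hta
  have hmemU : ∀ (ℓ : Fin t) (x : V), ∃ i, x ∈ H ℓ i := by
    intro ℓ x
    have hx : x ∈ ⋃ i, H ℓ i := (hcover ℓ) ▸ Set.mem_univ x
    exact Set.mem_iUnion.1 hx
  have hmemJ : ∀ (ℓ : Fin t) (x : V), ∃ j, x ∈ H ℓ (π ℓ j) := by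
    intro ℓ x
    obtain ⟨i₀, hi⟩ := hmemU ℓ x
    exact ⟨(π ℓ).symm i₀, by rwa [Equiv.apply_symm_apply]⟩
  have hmem_eq : ∀ (ℓ : Fin t) {i j : ι} {x : V}, x ∈ H ℓ i → x ∈ H ℓ j → i = j := by
    intro ℓ i j x hi hj
    by_contra hne'
    exact Set.disjoint_left.1 (hdisj ℓ hne') hi hj
  have hclosed : ∀ (ℓ : Fin t) (i : ι) (x c c' : V), c ∈ H ℓ i → c' ∈ H ℓ i →
      (c = x ∨ (Γ ℓ).Adj c x) → (c' = x ∨ (Γ ℓ).Adj c' x) → c = c' := by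
    intro ℓ i x c c' hc hc' h1 h2
    obtain ⟨c0, -, hu⟩ := hcode ℓ i x
    exact (hu c ⟨hc, h1⟩).trans (hu c' ⟨hc', h2⟩).symm
  have hindep : ∀ (ℓ : Fin t) (i : ι) {x y : V}, x ∈ H ℓ i → y ∈ H ℓ i →
      ¬ (Γ ℓ).Adj x y := by
    intro ℓ i x y hx hy hadj
    have := hclosed ℓ i y x y hx hy (Or.inr hadj) (Or.inl rfl)
    exact hadj.ne this
  have hexadj : ∀ (ℓ : Fin t) (i : ι) (x : V), x ∉ H ℓ i →
      ∃! c, c ∈ H ℓ i ∧ (Γ ℓ).Adj c x := by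
    intro ℓ i x hx
    obtain ⟨c, ⟨hc, hor⟩, hu⟩ := hcode ℓ i x
    have hadj : (Γ ℓ).Adj c x := by
      rcases hor with rfl | h
      · exact absurd hc hx
      · exact h
    exact ⟨c, ⟨hc, hadj⟩, fun c' hc' => hu c' ⟨hc'.1, Or.inr hc'.2⟩⟩
  have hadj_same : ∀ {x y : V} {ℓ : Fin t} {j : ι}, x ∈ H ℓ (π ℓ j) →
      (F.Adj (x, ℓ) (y, ℓ) ↔ ((Γ ℓ).Adj x y ∨ (y ∈ H ℓ (π ℓ j) ∧ y ≠ x))) := by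
    intro x y ℓ j hx
    rw [hF]
    constructor
    · rintro ⟨hne', (⟨-, hadj⟩ | ⟨j', hx', hy⟩)⟩
      · exact Or.inl hadj
      · have hj : j' = j := (π ℓ).injective (hmem_eq ℓ hx' hx)
        subst hj
        refine Or.inr ⟨hy, fun h => hne' ?_⟩
        rw [h]
    · rintro (h | ⟨hy, hyx⟩)
      · exact ⟨fun hEq => h.ne (congrArg Prod.fst hEq), Or.inl ⟨rfl, h⟩⟩
      · exact ⟨fun hEq => hyx (congrArg Prod.fst hEq).symm, Or.inr ⟨j, hx, hy⟩⟩
  have hadj_cross : ∀ {x y : V} {ℓ m : Fin t}, ℓ ≠ m → ∀ {j : ι}, x ∈ H ℓ (π ℓ j) →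
      (F.Adj (x, ℓ) (y, m) ↔ y ∈ H m (π m j)) := by
    intro x y ℓ m hlm j hx
    rw [hF]
    constructor
    · rintro ⟨-, (⟨h2, -⟩ | ⟨j', hx', hy⟩)⟩
      · exact absurd h2 hlm
      · have hj : j' = j := (π ℓ).injective (hmem_eq ℓ hx' hx)
        subst hj
        exact hy
    · intro hy
      exact ⟨fun hEq => hlm (congrArg Prod.snd hEq), Or.inr ⟨j, hx, hy⟩⟩
  have hSsize : ∀ i : ι, ({p : V × Fin t | p.1 ∈ H p.2 (π p.2 i)}).ncard = l + 2 := by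
    intro i
    rw [ncard_layered _ (fun n => H n (π n i)) (fun z n => Iff.rfl)]
    simp only [hsize]
    rw [Finset.sum_const, Finset.card_univ, Fintype.card_fin, smul_eq_mul, htA]
  refine ⟨fun i => ⟨⟨?_, ?_⟩, hSsize i⟩, ?_, ?_, ?_, ?_⟩
  · -- clique
    rintro ⟨x, ℓ⟩ hx ⟨y, m⟩ hy hxy
    rw [hF]
    exact ⟨hxy, Or.inr ⟨i, hx, hy⟩⟩
  · -- 1-regular
    rintro ⟨x, ℓ⟩ hx
    simp only [Set.mem_setOf_eq] at hx
    obtain ⟨j, hxj⟩ := hmemJ ℓ x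
    have hji : j ≠ i := fun h => hx (h ▸ hxj)
    obtain ⟨c, ⟨hcmem, hcadj⟩, hcu⟩ := hexadj ℓ (π ℓ i) x hx
    refine ⟨(c, ℓ), ⟨hcmem, ?_⟩, ?_⟩
    · rw [hF]
      exact ⟨fun hEq => hcadj.ne' (congrArg Prod.fst hEq), Or.inl ⟨rfl, hcadj.symm⟩⟩
    · rintro ⟨c', m⟩ ⟨hc'mem, hc'adj⟩
      simp only [Set.mem_setOf_eq] at hc'mem
      rw [hF] at hc'adj
      obtain ⟨hne', hcs⟩ := hc'adj
      rcases hcs with ⟨h2, hadjxc⟩ | ⟨j', hxj', hc'⟩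
      · simp only at h2
        subst h2
        have : c' = c := hcu c' ⟨hc'mem, hadjxc.symm⟩
        rw [this]
      · simp only at hxj' hc'
        have hjj : j' = j := (π ℓ).injective (hmem_eq ℓ hxj' hxj)
        subst hjj
        exact absurd ((π m).injective (hmem_eq m hc' hc'mem)) hji
  · -- card
    rw [Nat.card_prod, (hER ⟨0, ht⟩).1, Nat.card_eq_fintype_card, Fintype.card_fin]
  · -- regularity
    rintro ⟨x, ℓ⟩
    obtain ⟨j, hxj⟩ := hmemJ ℓ x
    rw [ncard_layered _ (fun n => if n = ℓ then
        ((Γ ℓ).neighborSet x ∪ (H ℓ (π ℓ j) \ {x})) else H n (π n j))]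
    · rw [← Finset.add_sum_erase _ _ (Finset.mem_univ ℓ), if_pos rfl]
      have hd : Disjoint ((Γ ℓ).neighborSet x) (H ℓ (π ℓ j) \ {x}) := by
        rw [Set.disjoint_left]
        rintro z hz ⟨hz2, -⟩
        exact hindep _ _ hxj hz2 hz
      rw [Set.ncard_union_eq hd, (hER ℓ).2.1 x,
        Set.ncard_diff_singleton_of_mem hxj, hsize]
      have hval : ∀ n ∈ Finset.univ.erase ℓ, (if n = ℓ then
          ((Γ ℓ).neighborSet x ∪ (H ℓ (π ℓ j) \ {x})) else H n (π n j)).ncard = a :=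
        fun n hn => by rw [if_neg (Finset.mem_erase.1 hn).1, hsize]
      rw [Finset.sum_congr rfl hval, Finset.sum_const,
        Finset.card_erase_of_mem (Finset.mem_univ ℓ), Finset.card_univ,
        Fintype.card_fin, smul_eq_mul]
      have h1 : (t - 1) * a + 1 * a = t * a := by
        rw [← Nat.add_mul]; congr 1; omega
      omega
    · intro z n
      by_cases hn : n = ℓ
      · subst hn
        rw [if_pos rfl]
        simp only [SimpleGraph.mem_neighborSet]
        rw [hadj_same hxj]
        simp only [Set.mem_union, SimpleGraph.mem_neighborSet, Set.mem_diff,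
          Set.mem_singleton_iff]
        try tauto
      · rw [if_neg hn]
        simp only [SimpleGraph.mem_neighborSet]
        exact hadj_cross (fun h => hn h.symm) hxj
  · -- F ≠ ⊥
    have hbot := (hER ⟨0, ht⟩).2.2.1
    have hedge : ∃ x y, (Γ ⟨0, ht⟩).Adj x y := by
      by_contra h
      push_neg at h
      exact hbot (by ext x y; simp [h x y])
    obtain ⟨x, y, hxy⟩ := hedge
    intro hFbot
    have hFxy : F.Adj (x, ⟨0, ht⟩) (y, ⟨0, ht⟩) := by
      rw [hF]
      exact ⟨fun hEq => hxy.ne (congrArg Prod.fst hEq), Or.inl ⟨rfl, hxy⟩⟩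
    rw [hFbot] at hFxy
    exact hFxy
  · -- common neighbors
    rintro ⟨x, ℓ⟩ ⟨y, m⟩ hadj
    obtain ⟨jx, hxj⟩ := hmemJ ℓ x
    obtain ⟨jy, hyj⟩ := hmemJ m y
    rw [hF] at hadj
    obtain ⟨hpq, hcase⟩ := hadj
    by_cases hlm : ℓ = m
    · subst hlm
      have hxyne : x ≠ y := fun h => hpq (by rw [h])
      by_cases hjxy : jx = jy
      · -- same code: not Γ-adjacent
        subst hjxy
        have ha2 : 2 ≤ a := by
          have h' : 1 < (H ℓ (π ℓ jx)).ncard := by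
            rw [Set.one_lt_ncard_iff]
            exact ⟨x, y, hxj, hyj, hxyne⟩
          rw [hsize] at h'
          omega
        rw [ncard_layered _ (fun n => if n = ℓ then
            (H ℓ (π ℓ jx) \ {x, y}) else H n (π n jx))]
        · rw [← Finset.add_sum_erase _ _ (Finset.mem_univ ℓ), if_pos rfl]
          have hys : y ∈ H ℓ (π ℓ jx) \ {x} := ⟨hyj, by simp [hxyne.symm]⟩
          have hdd : H ℓ (π ℓ jx) \ {x, y} = (H ℓ (π ℓ jx) \ {x}) \ {y} := by
            rw [Set.diff_diff, Set.singleton_union]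
          have hfirst : (H ℓ (π ℓ jx) \ {x, y}).ncard = a - 1 - 1 := by
            rw [hdd, Set.ncard_diff_singleton_of_mem hys,
              Set.ncard_diff_singleton_of_mem hxj, hsize]
          rw [hfirst]
          have hval : ∀ n ∈ Finset.univ.erase ℓ, (if n = ℓ then
              (H ℓ (π ℓ jx) \ {x, y}) else H n (π n jx)).ncard = a :=
            fun n hn => by rw [if_neg (Finset.mem_erase.1 hn).1, hsize]
          rw [Finset.sum_congr rfl hval, Finset.sum_const,
            Finset.card_erase_of_mem (Finset.mem_univ ℓ), Finset.card_univ,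
            Fintype.card_fin, smul_eq_mul]
          have h1 : (t - 1) * a + 1 * a = t * a := by
            rw [← Nat.add_mul]; congr 1; omega
          omega
        · intro z n
          rw [SimpleGraph.mem_commonNeighbors]
          by_cases hn : n = ℓ
          · subst hn
            rw [if_pos rfl, hadj_same hxj, hadj_same hyj]
            simp only [Set.mem_diff, Set.mem_insert_iff, Set.mem_singleton_iff]
            constructor
            · rintro ⟨h1, h2⟩
              rcases h1 with h1 | ⟨hz1, hzx⟩
              · rcases h2 with h2 | ⟨hz2, hzy⟩
                · exact absurd (hclosed _ _ z x y hxj hyj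
                    (Or.inr h1) (Or.inr h2)) hxyne
                · exact absurd h1 (hindep _ _ hxj hz2)
              · rcases h2 with h2 | ⟨hz2, hzy⟩
                · exact absurd h2 (hindep _ _ hyj hz1)
                · exact ⟨hz1, by tauto⟩
            · rintro ⟨hz, hne2⟩
              push_neg at hne2
              exact ⟨Or.inr ⟨hz, hne2.1⟩, Or.inr ⟨hz, hne2.2⟩⟩
          · rw [if_neg hn, hadj_cross (fun h => hn h.symm) hxj,
              hadj_cross (fun h => hn h.symm) hyj]
            tauto
      · -- Γ-adjacent (different codes)
        have hadjxy : (Γ ℓ).Adj x y := by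
          rcases hcase with ⟨-, h⟩ | ⟨j', h1, h2⟩
          · exact h
          · have e1 : j' = jx := (π ℓ).injective (hmem_eq ℓ h1 hxj)
            have e2 : j' = jy := (π ℓ).injective (hmem_eq ℓ h2 hyj)
            exact absurd (e1 ▸ e2) hjxy
        rw [ncard_layered _ (fun n => if n = ℓ then
            (Γ ℓ).commonNeighbors x y else ∅)]
        · rw [← Finset.add_sum_erase _ _ (Finset.mem_univ ℓ), if_pos rfl,
            (hER ℓ).2.2.2 x y hadjxy]
          have hrest : ∑ n ∈ Finset.univ.erase ℓ, (if n = ℓ then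
              (Γ ℓ).commonNeighbors x y else ∅).ncard = 0 :=
            Finset.sum_eq_zero fun n hn => by
              rw [if_neg (Finset.mem_erase.1 hn).1, Set.ncard_empty]
          rw [hrest]
          omega
        · intro z n
          rw [SimpleGraph.mem_commonNeighbors]
          by_cases hn : n = ℓ
          · subst hn
            rw [if_pos rfl, hadj_same hxj, hadj_same hyj,
              SimpleGraph.mem_commonNeighbors]
            constructor
            · rintro ⟨h1, h2⟩
              rcases h1 with h1 | ⟨hz1, hzx⟩
              · rcases h2 with h2 | ⟨hz2, hzy⟩
                · exact ⟨h1, h2⟩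
                · have := hclosed _ _ x y z hyj hz2
                    (Or.inr hadjxy.symm) (Or.inr h1.symm)
                  exact absurd this.symm hzy
              · rcases h2 with h2 | ⟨hz2, hzy⟩
                · have := hclosed _ _ y x z hxj hz1
                    (Or.inr hadjxy) (Or.inr h2.symm)
                  exact absurd this.symm hzx
                · exact absurd ((π _).injective (hmem_eq _ hz1 hz2)) hjxy
            · rintro ⟨h1, h2⟩
              exact ⟨Or.inl h1, Or.inl h2⟩
          · rw [if_neg hn, hadj_cross (fun h => hn h.symm) hxj,
              hadj_cross (fun h => hn h.symm) hyj]
            constructor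
            · rintro ⟨h1, h2⟩
              have e : π n jx = π n jy := hmem_eq n h1 h2
              exact absurd ((π n).injective e) hjxy
            · rintro h
              exact absurd h (Set.notMem_empty z)
    · -- different layers
      have hjxy : jx = jy := by
        rcases hcase with ⟨h2, -⟩ | ⟨j', h1, h2⟩
        · exact absurd h2 hlm
        · have e1 : j' = jx := (π ℓ).injective (hmem_eq ℓ h1 hxj)
          have e2 : j' = jy := (π m).injective (hmem_eq m h2 hyj)
          exact e1 ▸ e2
      have hyj' : y ∈ H m (π m jx) := hjxy ▸ hyj
      rw [ncard_layered _ (fun n => if n = ℓ then H ℓ (π ℓ jx) \ {x}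
          else if n = m then H m (π m jx) \ {y} else H n (π n jx))]
      · rw [← Finset.add_sum_erase _ _ (Finset.mem_univ ℓ), if_pos rfl]
        have hm : m ∈ Finset.univ.erase ℓ := by
          simp [Ne.symm hlm]
        rw [← Finset.add_sum_erase _ _ hm, if_neg (Ne.symm hlm), if_pos rfl]
        rw [Set.ncard_diff_singleton_of_mem hxj,
          Set.ncard_diff_singleton_of_mem hyj', hsize, hsize]
        have hval : ∀ n ∈ (Finset.univ.erase ℓ).erase m, (if n = ℓ then
            H ℓ (π ℓ jx) \ {x} else if n = m then H m (π m jx) \ {y}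
            else H n (π n jx)).ncard = a := by
          intro n hn
          obtain ⟨hn1, hn2⟩ := Finset.mem_erase.1 hn
          obtain ⟨hn3, -⟩ := Finset.mem_erase.1 hn2
          rw [if_neg hn3, if_neg hn1, hsize]
        rw [Finset.sum_congr rfl hval, Finset.sum_const, smul_eq_mul,
          Finset.card_erase_of_mem hm,
          Finset.card_erase_of_mem (Finset.mem_univ ℓ), Finset.card_univ,
          Fintype.card_fin]
        have h1 : (t - 1 - 1) * a + 2 * a = t * a := by
          rw [← Nat.add_mul]; congr 1; omega
        omega
      · intro z n
        rw [SimpleGraph.mem_commonNeighbors]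
        by_cases hn : n = ℓ
        · subst hn
          rw [if_pos rfl, hadj_same hxj,
            hadj_cross (fun h => hlm h.symm) hyj']
          simp only [Set.mem_diff, Set.mem_singleton_iff]
          constructor
          · rintro ⟨h1, h2⟩
            rcases h1 with h1 | ⟨hz1, hzx⟩
            · exact absurd h1 (hindep _ _ hxj h2)
            · exact ⟨hz1, hzx⟩
          · rintro ⟨hz, hzx⟩
            exact ⟨Or.inr ⟨hz, hzx⟩, hz⟩
        · by_cases hnm : n = m
          · subst hnm
            rw [if_neg hn, if_pos rfl, hadj_cross hlm hxj, hadj_same hyj']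
            simp only [Set.mem_diff, Set.mem_singleton_iff]
            constructor
            · rintro ⟨h1, h2⟩
              rcases h2 with h2 | ⟨hz1, hzy⟩
              · exact absurd h2 (hindep _ _ hyj' h1)
              · exact ⟨hz1, hzy⟩
            · rintro ⟨hz, hzy⟩
              exact ⟨hz, Or.inr ⟨hz, hzy⟩⟩
          · rw [if_neg hn, if_neg hnm, hadj_cross (fun h => hn h.symm) hxj,
              hadj_cross (fun h => hnm h.symm) hyj']
            tauto
end

section
/- Let Γ be a finite graph whose vertex set is partitioned as C1 ∪ C2 ∪ D with |C1| = |C2|, such that the induced subgraphs on C1, C2 and C1 ∪ C2 are regular with the degrees on C1 and C2 equal, and such that every x ∈ D satisfies either |N(x) ∩ C1| = |N(x) ∩ C2| or N(x) ∩ (C1 ∪ C2) ∈ {C1, C2}. Let Γ' be obtained from Γ by swapping, for each x ∈ D with N(x) ∩ (C1 ∪ C2) = C1 (resp. C2), its neighbourhood in C1 ∪ C2 to C2 (resp. C1), leaving all other adjacencies unchanged. Then Γ' is cospectral with Γ (the adjacency matrices of Γ and Γ' have the same characteristic polynomial). -/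
/-!
Let `s` be `1` on `C1`, `-1` on `C2` and `0` on `D`, and `m = |C1| = |C2|`, so that `s ⬝ s = 2m`.
Regularity gives `A s = (2d - e) s + h` with `h` supported on `D`, and the condition on `D`
forces `h x` to be `m`, `-m` or `0` according as `N(x) ∩ (C1 ∪ C2)` is `C1`, `C2` or neither.
Hence the switched adjacency matrix is `A - m⁻¹ (s hᵀ + h sᵀ)`, which is `Q A Q` for the
reflection `Q = 1 - m⁻¹ s sᵀ`; since `Q² = 1`, it has the characteristic polynomial of `A`.
-/

open Matrix

namespace Matrix
variable {n K : Type*} [Fintype n] [DecidableEq n] [Field K]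

theorem charpoly_sub_smul_vecMulVec_add_vecMulVec (A : Matrix n n K) (hA : A.IsSymm)
    (s h : n → K) (m c : K) (hss : s ⬝ᵥ s = 2 * m) (hAs : A *ᵥ s = c • s + h)
    (hhs : h ⬝ᵥ s = 0) :
    (A - m⁻¹ • (vecMulVec s h + vecMulVec h s)).charpoly = A.charpoly := by
  rcases eq_or_ne m 0 with rfl | hm
  · simp
  set N := vecMulVec s s
  set Q : Matrix n n K := 1 - m⁻¹ • N
  have hNN : N * N = (2 * m) • N := by rw [vecMulVec_mul_vecMulVec, hss, vecMulVec_smul]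
  have hsA : s ᵥ* A = c • s + h := by rw [← mulVec_transpose, hA.eq, hAs]
  have hAN : A * N = c • N + vecMulVec h s := by
    rw [mul_vecMulVec, hAs, add_vecMulVec, smul_vecMulVec]
  have hNA : N * A = c • N + vecMulVec s h := by
    rw [vecMulVec_mul, hsA, vecMulVec_add, vecMulVec_smul]
  have hshs : vecMulVec s h * N = 0 := by
    rw [vecMulVec_mul_vecMulVec, hhs, zero_smul, vecMulVec_zero]
  have hQQ : Q * Q = 1 := by
    simp only [Q, sub_mul, mul_sub, one_mul, mul_one, smul_mul_assoc, mul_smul_comm, hNN,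
      smul_smul]
    match_scalars <;> field_simp
    ring
  have hQAQ : Q * A * Q = A - m⁻¹ • (vecMulVec s h + vecMulVec h s) := by
    simp only [Q, sub_mul, mul_sub, one_mul, mul_one, smul_mul_assoc, mul_smul_comm, hNA, hAN,
      add_mul, hNN, hshs, smul_smul]
    match_scalars <;> field_simp
    ring
  rw [← hQAQ, charpoly_mul_comm, ← mul_assoc, hQQ, one_mul]

end Matrix

theorem Set.sum_indicator_one {V R : Type*} [Fintype V] [AddCommMonoidWithOne R] (S : Set V) :
    ∑ x, S.indicator (1 : V → R) x = S.ncard := by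
  classical
  simp [Set.indicator_apply, Finset.sum_boole, Set.ncard_eq_toFinset_card']

theorem dotProduct_indicator_sub_indicator_self {V R : Type*} [Fintype V] [Ring R]
    {C1 C2 : Set V} (hd : Disjoint C1 C2) :
    (C1.indicator 1 - C2.indicator 1 : V → R) ⬝ᵥ (C1.indicator 1 - C2.indicator 1) =
      C1.ncard + C2.ncard := by
  have hsq : ∀ x, (C1.indicator 1 - C2.indicator 1 : V → R) x *
      (C1.indicator 1 - C2.indicator 1 : V → R) x = (C1 ∪ C2).indicator 1 x := by
    intro x
    by_cases h1 : x ∈ C1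
    · simp [h1, hd.notMem_of_mem_left h1]
    · by_cases h2 : x ∈ C2 <;> simp [h1, h2]
  rw [dotProduct, Finset.sum_congr rfl fun x _ => hsq x, Set.sum_indicator_one,
    Set.ncard_union_eq hd, Nat.cast_add]

theorem indicator_sub_indicator_apply_eq_zero {V R : Type*} [AddGroup R] [One R]
    {C1 C2 : Set V} {x : V} (hx : x ∉ C1 ∪ C2) :
    (C1.indicator 1 - C2.indicator 1 : V → R) x = 0 := by
  rw [Set.mem_union, not_or] at hx
  rw [Pi.sub_apply, Set.indicator_of_notMem hx.1, Set.indicator_of_notMem hx.2, sub_zero]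

namespace SimpleGraph
variable {V : Type*} (G : SimpleGraph V) [DecidableRel G.Adj]

theorem map_adjMatrix {R S : Type*} [NonAssocSemiring R] [NonAssocSemiring S] (f : R →+* S) :
    (G.adjMatrix R).map f = G.adjMatrix S := by
  ext x y
  rw [map_apply, adjMatrix_apply, adjMatrix_apply, apply_ite f, map_one, map_zero]

variable [Fintype V]

theorem adjMatrix_mulVec_indicator_one_apply {R : Type*} [NonAssocSemiring R] (S : Set V)
    (x : V) : (G.adjMatrix R *ᵥ S.indicator 1) x = (G.neighborSet x ∩ S).ncard := by
  classical
  rw [adjMatrix_mulVec_apply, Set.ncard_eq_toFinset_card', Set.toFinset_inter,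
    ← neighborFinset_def, ← Finset.filter_mem_eq_inter]
  simp [Set.indicator_apply]

variable {R : Type*} [Ring R] {C1 C2 : Set V}

theorem adjMatrix_mulVec_indicator_sub_indicator_apply (x : V) :
    (G.adjMatrix R *ᵥ (C1.indicator 1 - C2.indicator 1)) x =
      (G.neighborSet x ∩ C1).ncard - (G.neighborSet x ∩ C2).ncard := by
  rw [mulVec_sub, Pi.sub_apply, adjMatrix_mulVec_indicator_one_apply,
    adjMatrix_mulVec_indicator_one_apply]

theorem adjMatrix_mulVec_indicator_sub_indicator_apply_of_mem (hd12 : Disjoint C1 C2)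
    {d e : ℕ} (hreg1 : ∀ x ∈ C1, (G.neighborSet x ∩ C1).ncard = d)
    (hreg2 : ∀ x ∈ C2, (G.neighborSet x ∩ C2).ncard = d)
    (hregU : ∀ x ∈ C1 ∪ C2, (G.neighborSet x ∩ (C1 ∪ C2)).ncard = e) {x : V}
    (hx : x ∈ C1 ∪ C2) :
    (G.adjMatrix R *ᵥ (C1.indicator 1 - C2.indicator 1)) x =
      (2 * d - e : R) * (C1.indicator 1 - C2.indicator 1 : V → R) x := by
  have hsplit : ((G.neighborSet x ∩ C1).ncard + (G.neighborSet x ∩ C2).ncard : R) = e := by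
    rw [← hregU x hx, Set.inter_union_distrib_left, Set.ncard_union_eq
      (hd12.mono Set.inter_subset_right Set.inter_subset_right), Nat.cast_add]
  rw [adjMatrix_mulVec_indicator_sub_indicator_apply]
  rcases hx with hx1 | hx2
  · have hx2 : x ∉ C2 := hd12.notMem_of_mem_left hx1
    simp only [Pi.sub_apply, Set.indicator_of_mem hx1, Set.indicator_of_notMem hx2,
      Pi.one_apply, hreg1 x hx1] at hsplit ⊢
    rw [← hsplit]
    noncomm_ring
  · have hx1 : x ∉ C1 := hd12.notMem_of_mem_right hx2
    simp only [Pi.sub_apply, Set.indicator_of_mem hx2, Set.indicator_of_notMem hx1,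
      Pi.one_apply, hreg2 x hx2] at hsplit ⊢
    rw [← hsplit]
    noncomm_ring

theorem adjMatrix_mulVec_indicator_sub_indicator_apply_of_nbhd (hd12 : Disjoint C1 C2)
    (hcard : C1.ncard = C2.ncard) {x : V}
    (hx : (G.neighborSet x ∩ C1).ncard = (G.neighborSet x ∩ C2).ncard ∨
      G.neighborSet x ∩ (C1 ∪ C2) = C1 ∨ G.neighborSet x ∩ (C1 ∪ C2) = C2) :
    (G.adjMatrix R *ᵥ (C1.indicator 1 - C2.indicator 1)) x =
      if G.neighborSet x ∩ (C1 ∪ C2) = C1 then (C1.ncard : R)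
      else if G.neighborSet x ∩ (C1 ∪ C2) = C2 then -(C1.ncard : R) else 0 := by
  have h1 : G.neighborSet x ∩ C1 = G.neighborSet x ∩ (C1 ∪ C2) ∩ C1 := by
    rw [Set.inter_assoc, Set.union_inter_cancel_left]
  have h2 : G.neighborSet x ∩ C2 = G.neighborSet x ∩ (C1 ∪ C2) ∩ C2 := by
    rw [Set.inter_assoc, Set.union_inter_cancel_right]
  rw [adjMatrix_mulVec_indicator_sub_indicator_apply]
  split_ifs with hN1 hN2
  · rw [h1, h2, hN1, Set.inter_self, hd12.inter_eq]
    simp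
  · rw [h1, h2, hN2, Set.inter_self, hd12.symm.inter_eq, hcard]
    simp
  · rcases hx with hx | hx | hx
    · rw [hx, sub_self]
    · exact absurd hx hN1
    · exact absurd hx hN2

variable {K : Type*} [Field K] [CharZero K] {D : Set V}
variable (G' : SimpleGraph V) [DecidableRel G'.Adj]

theorem adjMatrix_apply_of_switch (hd12 : Disjoint C1 C2) (hcard : C1.ncard = C2.ncard)
    {x y : V} (hx : (G.neighborSet x ∩ C1).ncard = (G.neighborSet x ∩ C2).ncard ∨
      G.neighborSet x ∩ (C1 ∪ C2) = C1 ∨ G.neighborSet x ∩ (C1 ∪ C2) = C2)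
    (hy : y ∈ C1 ∪ C2)
    (hxy : G'.Adj x y ↔ if G.neighborSet x ∩ (C1 ∪ C2) = C1 then y ∈ C2
      else if G.neighborSet x ∩ (C1 ∪ C2) = C2 then y ∈ C1 else G.Adj x y) :
    G'.adjMatrix K x y = G.adjMatrix K x y - (C1.ncard : K)⁻¹ *
      ((G.adjMatrix K *ᵥ (C1.indicator 1 - C2.indicator 1)) x *
        (C1.indicator 1 - C2.indicator 1 : V → K) y) := by
  classical
  have hm : (C1.ncard : K) ≠ 0 := by
    rw [Nat.cast_ne_zero]
    rcases hy with hy | hy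
    · exact Set.ncard_ne_zero_of_mem hy
    · exact hcard ▸ Set.ncard_ne_zero_of_mem hy
  have hGy : G.Adj x y ↔ y ∈ G.neighborSet x ∩ (C1 ∪ C2) := by simp [hy]
  rw [adjMatrix_mulVec_indicator_sub_indicator_apply_of_nbhd G hd12 hcard hx]
  by_cases hN1 : G.neighborSet x ∩ (C1 ∪ C2) = C1
  · rw [hN1] at hGy
    rw [if_pos hN1] at hxy ⊢
    simp only [adjMatrix_apply, hxy, hGy, inv_mul_cancel_left₀ hm, Set.indicator_apply,
      Pi.one_apply, Pi.sub_apply]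
    ring
  by_cases hN2 : G.neighborSet x ∩ (C1 ∪ C2) = C2
  · rw [hN2] at hGy
    rw [if_neg hN1, if_pos hN2] at hxy ⊢
    simp only [adjMatrix_apply, hxy, hGy, neg_mul, mul_neg, inv_mul_cancel_left₀ hm,
      Set.indicator_apply, Pi.one_apply, Pi.sub_apply]
    ring
  · rw [if_neg hN1, if_neg hN2] at hxy ⊢
    simp only [adjMatrix_apply, hxy, zero_mul, mul_zero, sub_zero]

theorem adjMatrix_eq_of_switch (hd12 : Disjoint C1 C2) (hC : IsCompl (C1 ∪ C2) D)
    (hcard : C1.ncard = C2.ncard)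
    (hD : ∀ x ∈ D, (G.neighborSet x ∩ C1).ncard = (G.neighborSet x ∩ C2).ncard ∨
      G.neighborSet x ∩ (C1 ∪ C2) = C1 ∨ G.neighborSet x ∩ (C1 ∪ C2) = C2)
    (hrow : ∀ x ∈ D, ∀ y ∉ D, G'.Adj x y ↔
      if G.neighborSet x ∩ (C1 ∪ C2) = C1 then y ∈ C2
      else if G.neighborSet x ∩ (C1 ∪ C2) = C2 then y ∈ C1 else G.Adj x y)
    (hrest : ∀ x y, (x ∈ D ↔ y ∈ D) → (G'.Adj x y ↔ G.Adj x y))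
    {s h : V → K} (hs : s = C1.indicator 1 - C2.indicator 1)
    (hh : h = D.indicator (G.adjMatrix K *ᵥ s)) :
    G'.adjMatrix K = G.adjMatrix K - (C1.ncard : K)⁻¹ • (vecMulVec s h + vecMulVec h s) := by
  have hmem : ∀ y, y ∉ D ↔ y ∈ C1 ∪ C2 := fun y => by
    rw [← hC.compl_eq, Set.notMem_compl_iff]
  have hsD : ∀ x ∈ D, s x = 0 := fun x hx =>
    hs ▸ indicator_sub_indicator_apply_eq_zero (hC.disjoint.notMem_of_mem_right hx)
  have hhD : ∀ x ∉ D, h x = 0 := fun x hx => by rw [hh, Set.indicator_of_notMem hx]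
  have hentry : ∀ x y, x ∈ D ∨ y ∉ D → G'.adjMatrix K x y =
      G.adjMatrix K x y - (C1.ncard : K)⁻¹ * (s x * h y + h x * s y) := by
    rintro x y hxy
    by_cases hx : x ∈ D <;> by_cases hy : y ∈ D
    · simp [hsD x hx, hsD y hy, adjMatrix_apply, hrest x y (iff_of_true hx hy)]
    · rw [hsD x hx, hhD y hy, zero_mul, zero_add, hh, Set.indicator_of_mem hx, hs]
      exact adjMatrix_apply_of_switch G G' hd12 hcard (hD x hx) ((hmem y).mp hy)
        (hrow x hx y hy)
    · tauto
    · simp [hhD x hx, hhD y hy, adjMatrix_apply, hrest x y (iff_of_false hx hy)]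
  ext x y
  rw [Matrix.sub_apply, Matrix.smul_apply, Matrix.add_apply, vecMulVec_apply, vecMulVec_apply,
    smul_eq_mul]
  by_cases hxy : x ∈ D ∨ y ∉ D
  · exact hentry x y hxy
  · rw [← transpose_apply (G'.adjMatrix K), transpose_adjMatrix, hentry y x (by tauto),
      ← transpose_apply (G.adjMatrix K) y, transpose_adjMatrix]
    ring

theorem charpoly_adjMatrix_eq_of_switch [DecidableEq V] (hd12 : Disjoint C1 C2)
    (hC : IsCompl (C1 ∪ C2) D) (hcard : C1.ncard = C2.ncard) {d e : ℕ}
    (hreg1 : ∀ x ∈ C1, (G.neighborSet x ∩ C1).ncard = d)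
    (hreg2 : ∀ x ∈ C2, (G.neighborSet x ∩ C2).ncard = d)
    (hregU : ∀ x ∈ C1 ∪ C2, (G.neighborSet x ∩ (C1 ∪ C2)).ncard = e)
    (hD : ∀ x ∈ D, (G.neighborSet x ∩ C1).ncard = (G.neighborSet x ∩ C2).ncard ∨
      G.neighborSet x ∩ (C1 ∪ C2) = C1 ∨ G.neighborSet x ∩ (C1 ∪ C2) = C2)
    (hrow : ∀ x ∈ D, ∀ y ∉ D, G'.Adj x y ↔
      if G.neighborSet x ∩ (C1 ∪ C2) = C1 then y ∈ C2
      else if G.neighborSet x ∩ (C1 ∪ C2) = C2 then y ∈ C1 else G.Adj x y)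
    (hrest : ∀ x y, (x ∈ D ↔ y ∈ D) → (G'.Adj x y ↔ G.Adj x y)) :
    (G'.adjMatrix K).charpoly = (G.adjMatrix K).charpoly := by
  set s : V → K := C1.indicator 1 - C2.indicator 1 with hs
  set h := D.indicator (G.adjMatrix K *ᵥ s) with hh
  have hsD : ∀ x ∈ D, s x = 0 := fun x hx =>
    indicator_sub_indicator_apply_eq_zero (hC.disjoint.notMem_of_mem_right hx)
  have hss : s ⬝ᵥ s = 2 * (C1.ncard : K) := by
    rw [dotProduct_indicator_sub_indicator_self hd12, ← hcard, two_mul]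
  have hAs : G.adjMatrix K *ᵥ s = (2 * d - e : K) • s + h := by
    ext x
    by_cases hx : x ∈ D
    · simp [hh, hsD x hx, Set.indicator_of_mem hx]
    · have hx' : x ∈ C1 ∪ C2 := by rwa [← hC.compl_eq, Set.notMem_compl_iff] at hx
      rw [Pi.add_apply, hh, Set.indicator_of_notMem hx, add_zero, Pi.smul_apply, smul_eq_mul]
      exact adjMatrix_mulVec_indicator_sub_indicator_apply_of_mem G hd12 hreg1 hreg2 hregU hx'
  have hhs : h ⬝ᵥ s = 0 := Finset.sum_eq_zero fun x _ => by
    by_cases hx : x ∈ D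
    · rw [hsD x hx, mul_zero]
    · rw [hh, Set.indicator_of_notMem hx, zero_mul]
  rw [adjMatrix_eq_of_switch G G' hd12 hC hcard hD hrow hrest hs hh]
  exact charpoly_sub_smul_vecMulVec_add_vecMulVec _ (isSymm_adjMatrix G) s h _ _ hss hAs hhs

end SimpleGraph

open scoped Classical in
/-- Wang–Qiu–Hu switching: switching the edges between `C1 ∪ C2` and `D`
produces a cospectral graph. -/
theorem stmt6 {V : Type*} [Fintype V] [DecidableEq V] (G : SimpleGraph V)
    (C1 C2 D : Set V)
    (hd12 : Disjoint C1 C2) (hd1D : Disjoint C1 D) (hd2D : Disjoint C2 D)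
    (hcover : C1 ∪ C2 ∪ D = Set.univ)
    (hcard : C1.ncard = C2.ncard)
    -- the induced subgraphs on `C1` and `C2` are regular with the same degree
    (hreg12 : ∃ d, (∀ x ∈ C1, (G.neighborSet x ∩ C1).ncard = d) ∧
                   (∀ x ∈ C2, (G.neighborSet x ∩ C2).ncard = d))
    -- the induced subgraph on `C1 ∪ C2` is regular
    (hregU : ∃ e, ∀ x ∈ C1 ∪ C2, (G.neighborSet x ∩ (C1 ∪ C2)).ncard = e)
    -- every vertex of `D` has equally many neighbours in `C1` and `C2`,
    -- or its neighbourhood in `C1 ∪ C2` is exactly `C1` or exactly `C2`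
    (hD : ∀ x ∈ D, (G.neighborSet x ∩ C1).ncard = (G.neighborSet x ∩ C2).ncard ∨
      G.neighborSet x ∩ (C1 ∪ C2) = C1 ∨ G.neighborSet x ∩ (C1 ∪ C2) = C2)
    -- `G'` is the switched graph
    (G' : SimpleGraph V)
    (hG' : ∀ x y, G'.Adj x y ↔
      ((x ∈ D ∧ y ∈ C1 ∪ C2 ∧
          ((G.neighborSet x ∩ (C1 ∪ C2) = C1 ∧ y ∈ C2) ∨
           (G.neighborSet x ∩ (C1 ∪ C2) = C2 ∧ y ∈ C1) ∨
           (G.neighborSet x ∩ (C1 ∪ C2) ≠ C1 ∧ G.neighborSet x ∩ (C1 ∪ C2) ≠ C2 ∧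
             G.Adj x y))) ∨
       (y ∈ D ∧ x ∈ C1 ∪ C2 ∧
          ((G.neighborSet y ∩ (C1 ∪ C2) = C1 ∧ x ∈ C2) ∨
           (G.neighborSet y ∩ (C1 ∪ C2) = C2 ∧ x ∈ C1) ∨
           (G.neighborSet y ∩ (C1 ∪ C2) ≠ C1 ∧ G.neighborSet y ∩ (C1 ∪ C2) ≠ C2 ∧
             G.Adj x y))) ∨
       (¬(x ∈ D ∧ y ∈ C1 ∪ C2) ∧ ¬(y ∈ D ∧ x ∈ C1 ∪ C2) ∧ G.Adj x y))) :
    (G.adjMatrix ℤ).charpoly = (G'.adjMatrix ℤ).charpoly := by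
  obtain ⟨d, hreg1, hreg2⟩ := hreg12
  obtain ⟨e, hregU⟩ := hregU
  have hC : IsCompl (C1 ∪ C2) D := ⟨hd1D.union_left hd2D, codisjoint_iff.mpr hcover⟩
  have hmem : ∀ y, y ∈ C1 ∪ C2 ↔ y ∉ D := fun y => by
    rw [← hC.compl_eq, Set.notMem_compl_iff]
  have hrow : ∀ x ∈ D, ∀ y ∉ D, G'.Adj x y ↔
      if G.neighborSet x ∩ (C1 ∪ C2) = C1 then y ∈ C2
      else if G.neighborSet x ∩ (C1 ∪ C2) = C2 then y ∈ C1 else G.Adj x y := by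
    intro x hx y hy
    rw [hG']
    have hxC : x ∉ C1 ∪ C2 := hC.disjoint.notMem_of_mem_right hx
    split_ifs <;> simp_all
  have hrest : ∀ x y, (x ∈ D ↔ y ∈ D) → (G'.Adj x y ↔ G.Adj x y) := by
    intro x y hxy
    rw [hG', hmem, hmem]
    tauto
  apply Polynomial.map_injective (Int.castRingHom ℚ) Int.cast_injective
  rw [← charpoly_map, ← charpoly_map, G.map_adjMatrix, G'.map_adjMatrix]
  exact (G.charpoly_adjMatrix_eq_of_switch G' hd12 hC hcard hreg1 hreg2 hregU hD
    hrow hrest).symm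
end

section
/- In the setting of the general construction F_Π(Γ^(1), …, Γ^(t)) with t ≥ 2, for any subset I ⊆ {1,…,t} containing 1 and any distinct i, j ∈ {1,…,v/a}, the sets C1 = ∪_{ℓ∈I} H^(ℓ)_{π_ℓ(i)}, C2 = ∪_{ℓ∈I} H^(ℓ)_{π_ℓ(j)} (with π_1 = id) and D = V ∖ (C1 ∪ C2) satisfy the hypotheses of the WQH-switching: |C1| = |C2|, the induced subgraphs on C1, C2, C1 ∪ C2 are regular with equal degrees on C1 and C2, and every x ∈ D has either equally many neighbours in C1 and C2 or is adjacent to all of exactly one of C1, C2. -/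
/-- A vertex outside a perfect 1-code has a unique neighbour in the code. -/
lemma code_nbr_unique {V : Type*} {G : SimpleGraph V} {C : Set V}
    (h : IsPerfectOneCode G C) {x : V} (hx : x ∉ C) :
    ∃! c, c ∈ C ∧ G.Adj c x := by
  obtain ⟨c, ⟨hcC, hc⟩, huniq⟩ := h x
  rcases hc with rfl | hadj
  · exact absurd hcC hx
  · exact ⟨c, ⟨hcC, hadj⟩, fun d ⟨hdC, hd⟩ => huniq d ⟨hdC, Or.inr hd⟩⟩

/-- No two vertices of a perfect 1-code are adjacent. -/
lemma code_no_adj {V : Type*} {G : SimpleGraph V} {C : Set V}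
    (h : IsPerfectOneCode G C) {x : V} (hx : x ∈ C) {c : V} (hc : c ∈ C) :
    ¬ G.Adj c x := by
  intro hadj
  obtain ⟨c', _, huniq⟩ := h x
  have h1 : c = c' := huniq c ⟨hc, Or.inr hadj⟩
  have h2 : x = c' := huniq x ⟨hx, Or.inl rfl⟩
  exact G.irrefl (show G.Adj x x from (h1.trans h2.symm) ▸ hadj)

theorem stmt7 {V : Type*} [Fintype V] (v k l a t : ℕ) (ht : 0 < t) (ht2 : 2 ≤ t)
    (Γ : Fin t → SimpleGraph V)
    (hER : ∀ ℓ, IsEdgeRegular (Γ ℓ) v k l)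
    (hproper : a ∣ l + 2) (hne : a ≠ l + 2) (hta : a * t = l + 2)
    (ι : Type*) [Fintype ι] (hι : Fintype.card ι * a = v)
    (H : (ℓ : Fin t) → ι → Set V)
    (hcode : ∀ ℓ i, IsPerfectOneCode (Γ ℓ) (H ℓ i))
    (hsize : ∀ ℓ i, (H ℓ i).ncard = a)
    (hdisj : ∀ ℓ, Pairwise fun i j => Disjoint (H ℓ i) (H ℓ j))
    (hcover : ∀ ℓ, (⋃ i, H ℓ i) = Set.univ)
    (π : Fin t → Equiv.Perm ι) (hπ0 : π ⟨0, ht⟩ = 1)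
    -- `F` is the disjoint union of the `Γ ℓ` (modelled on `V × Fin t`), together with
    -- all edges inside each set `H 0 i ∪ H 1 (π 1 i) ∪ … ∪ H (t-1) (π (t-1) i)`.
    (F : SimpleGraph (V × Fin t))
    (hF : ∀ p q : V × Fin t, F.Adj p q ↔ (p ≠ q ∧
      ((p.2 = q.2 ∧ (Γ p.2).Adj p.1 q.1) ∨
        ∃ i, p.1 ∈ H p.2 (π p.2 i) ∧ q.1 ∈ H q.2 (π q.2 i))))
    -- the WQH-switching partition
    (I : Set (Fin t)) (hI : (⟨0, ht⟩ : Fin t) ∈ I)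
    (i j : ι) (hij : i ≠ j) :
    ∀ C1 C2 D : Set (V × Fin t),
      C1 = {p : V × Fin t | p.2 ∈ I ∧ p.1 ∈ H p.2 (π p.2 i)} →
      C2 = {p : V × Fin t | p.2 ∈ I ∧ p.1 ∈ H p.2 (π p.2 j)} →
      D = (C1 ∪ C2)ᶜ →
      C1.ncard = C2.ncard ∧
      (∃ d, (∀ x ∈ C1, (F.neighborSet x ∩ C1).ncard = d) ∧
            (∀ x ∈ C2, (F.neighborSet x ∩ C2).ncard = d)) ∧
      (∃ e, ∀ x ∈ C1 ∪ C2, (F.neighborSet x ∩ (C1 ∪ C2)).ncard = e) ∧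
      (∀ x ∈ D, (F.neighborSet x ∩ C1).ncard = (F.neighborSet x ∩ C2).ncard ∨
        F.neighborSet x ∩ (C1 ∪ C2) = C1 ∨ F.neighborSet x ∩ (C1 ∪ C2) = C2) := by
  classical
  intro C1 C2 D hC1 hC2 hD
  subst hC1 hC2 hD
  -- notation for the switching sets
  set S : ι → Set (V × Fin t) :=
    fun m => {p : V × Fin t | p.2 ∈ I ∧ p.1 ∈ H p.2 (π p.2 m)} with hSdef
  -- basic facts about the partition into codes
  have hHdisj : ∀ (ℓ : Fin t) {m m' : ι}, m ≠ m' → ∀ {y : V},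
      y ∈ H ℓ (π ℓ m) → y ∈ H ℓ (π ℓ m') → False := by
    intro ℓ m m' hmm y h1 h2
    exact Set.disjoint_left.mp
      (hdisj ℓ (fun h => hmm ((π ℓ).injective h))) h1 h2
  have hmemex : ∀ (ℓ : Fin t) (y : V), ∃ m, y ∈ H ℓ (π ℓ m) := by
    intro ℓ y
    have hy : y ∈ ⋃ n, H ℓ n := by rw [hcover ℓ]; exact Set.mem_univ y
    obtain ⟨n, hn⟩ := Set.mem_iUnion.mp hy
    exact ⟨(π ℓ).symm n, by simpa using hn⟩
  -- adjacency characterization towards a vertex of `S m`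
  have hAdj : ∀ (m : ι) (p q : V × Fin t), q.1 ∈ H q.2 (π q.2 m) →
      (F.Adj p q ↔ p ≠ q ∧
        ((p.2 = q.2 ∧ (Γ p.2).Adj p.1 q.1) ∨ p.1 ∈ H p.2 (π p.2 m))) := by
    intro m p q hq
    rw [hF]
    refine and_congr_right fun _ => or_congr_right ?_
    constructor
    · rintro ⟨m', hp, hq'⟩
      rcases eq_or_ne m' m with rfl | hne'
      · exact hp
      · exact (hHdisj q.2 hne' hq' hq).elim
    · intro hp; exact ⟨m, hp, hq⟩
  -- the four computations of `F.neighborSet x ∩ S m`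
  have hself : ∀ (m : ι) (x : V × Fin t), x.2 ∈ I → x.1 ∈ H x.2 (π x.2 m) →
      F.neighborSet x ∩ S m = S m \ {x} := by
    intro m x hxI hxm
    ext q
    simp only [Set.mem_inter_iff, SimpleGraph.mem_neighborSet, Set.mem_diff,
      hSdef, Set.mem_setOf_eq, Set.mem_singleton_iff]
    constructor
    · rintro ⟨hadj, hq⟩
      exact ⟨hq, fun h => F.irrefl (h ▸ hadj)⟩
    · rintro ⟨hq, hqx⟩
      refine ⟨?_, hq⟩
      rw [hAdj m x q hq.2]
      exact ⟨fun h => hqx h.symm, Or.inr hxm⟩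
  have hfull : ∀ (m : ι) (x : V × Fin t), x.2 ∉ I → x.1 ∈ H x.2 (π x.2 m) →
      F.neighborSet x ∩ S m = S m := by
    intro m x hxI hxm
    refine Set.eq_of_subset_of_subset Set.inter_subset_right fun q hq => ?_
    refine ⟨?_, hq⟩
    show F.Adj x q
    rw [hAdj m x q hq.2]
    exact ⟨fun h => hxI (by rw [h]; exact hq.1), Or.inr hxm⟩
  have hempty : ∀ (m : ι) (x : V × Fin t), x.2 ∉ I → x.1 ∉ H x.2 (π x.2 m) →
      F.neighborSet x ∩ S m = ∅ := by
    intro m x hxI hxm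
    ext q
    simp only [Set.mem_inter_iff, SimpleGraph.mem_neighborSet, Set.mem_empty_iff_false,
      iff_false, not_and]
    intro hadj hq
    rw [hAdj m x q hq.2] at hadj
    rcases hadj.2 with ⟨h2, _⟩ | h2
    · exact hxI (h2 ▸ hq.1)
    · exact hxm h2
  have hsing : ∀ (m : ι) (x : V × Fin t), x.2 ∈ I → x.1 ∉ H x.2 (π x.2 m) →
      ∃ c : V, F.neighborSet x ∩ S m = {(c, x.2)} := by
    intro m x hxI hxm
    obtain ⟨c, ⟨hcH, hcadj⟩, hcu⟩ := code_nbr_unique (hcode x.2 (π x.2 m)) hxm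
    refine ⟨c, ?_⟩
    ext q
    simp only [Set.mem_inter_iff, SimpleGraph.mem_neighborSet, hSdef,
      Set.mem_setOf_eq, Set.mem_singleton_iff]
    constructor
    · rintro ⟨hadj, hq⟩
      rw [hAdj m x q hq.2] at hadj
      rcases hadj.2 with ⟨h2, hΓ⟩ | h2
      · have hq1 : q.1 ∈ H x.2 (π x.2 m) := by rw [h2]; exact hq.2
        have : q.1 = c := hcu q.1 ⟨hq1, hΓ.symm⟩
        exact Prod.ext this h2.symm
      · exact absurd h2 hxm
    · rintro rfl
      refine ⟨?_, hxI, hcH⟩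
      show F.Adj x (c, x.2)
      rw [hAdj m x (c, x.2) hcH]
      refine ⟨fun h => ?_, Or.inl ⟨rfl, hcadj.symm⟩⟩
      exact hxm (by rw [h]; exact hcH)
  -- disjointness of the two switching sets
  have hC12 : Disjoint (S i) (S j) := by
    rw [Set.disjoint_left]
    rintro p ⟨hpI, hpi⟩ ⟨_, hpj⟩
    exact hHdisj p.2 hij hpi hpj
  -- cardinality of `S m` does not depend on `m`
  have hcard : ∀ m : ι, (S m).ncard = (∑ _ℓ : {ℓ : Fin t // ℓ ∈ I}, a) := by
    intro m
    have hfin : ∀ (ℓ : Fin t) (n : ι), Fintype.card (H ℓ n) = a := by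
      intro ℓ n
      rw [← Set.toFinset_card, ← Set.ncard_eq_toFinset_card']
      exact hsize ℓ n
    have e : (S m) ≃ Σ ℓ : {ℓ : Fin t // ℓ ∈ I}, {x : V // x ∈ H ℓ.1 (π ℓ.1 m)} :=
      { toFun := fun p => ⟨⟨p.1.2, p.2.1⟩, ⟨p.1.1, p.2.2⟩⟩
        invFun := fun q => ⟨(q.2.1, q.1.1), q.1.2, q.2.2⟩
        left_inv := fun p => rfl
        right_inv := fun q => rfl }
    rw [← Nat.card_coe_set_eq, Nat.card_congr e, Nat.card_eq_fintype_card,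
      Fintype.card_sigma]
    exact Finset.sum_congr rfl fun ℓ _ => hfin ℓ.1 (π ℓ.1 m)
  have hcardij : (S i).ncard = (S j).ncard := (hcard i).trans (hcard j).symm
  refine ⟨hcardij, ⟨(S i).ncard - 1, ?_, ?_⟩, ⟨(S i).ncard, ?_⟩, ?_⟩
  · -- regularity on C1
    intro x hx
    rw [hself i x hx.1 hx.2, Set.ncard_diff_singleton_of_mem hx]
  · -- regularity on C2
    intro x hx
    rw [hself j x hx.1 hx.2, Set.ncard_diff_singleton_of_mem hx, hcardij]
  · -- regularity on C1 ∪ C2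
    intro x hx
    have hdistrib : F.neighborSet x ∩ (S i ∪ S j)
        = (F.neighborSet x ∩ S i) ∪ (F.neighborSet x ∩ S j) :=
      Set.inter_union_distrib_left _ _ _
    have hdisj' : Disjoint (F.neighborSet x ∩ S i) (F.neighborSet x ∩ S j) :=
      hC12.mono Set.inter_subset_right Set.inter_subset_right
    rcases hx with hx | hx
    · have hxj : x.1 ∉ H x.2 (π x.2 j) := fun h => hHdisj x.2 hij hx.2 h
      obtain ⟨c, hc⟩ := hsing j x hx.1 hxj
      rw [hdistrib, Set.ncard_union_eq hdisj' (Set.toFinite _) (Set.toFinite _),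
        hself i x hx.1 hx.2, hc, Set.ncard_singleton,
        Set.ncard_diff_singleton_add_one hx]
    · have hxi : x.1 ∉ H x.2 (π x.2 i) := fun h => hHdisj x.2 (Ne.symm hij) hx.2 h
      obtain ⟨c, hc⟩ := hsing i x hx.1 hxi
      rw [hdistrib, Set.ncard_union_eq hdisj' (Set.toFinite _) (Set.toFinite _),
        hself j x hx.1 hx.2, hc, Set.ncard_singleton, add_comm,
        Set.ncard_diff_singleton_add_one hx, hcardij]
  · -- the condition on D
    intro x hx
    rw [Set.mem_compl_iff, Set.mem_union, not_or] at hx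
    obtain ⟨hx1, hx2⟩ := hx
    obtain ⟨m0, hm0⟩ := hmemex x.2 x.1
    by_cases hxI : x.2 ∈ I
    · -- x in a layer of I, but in neither code
      have hxi : x.1 ∉ H x.2 (π x.2 i) := fun h => hx1 ⟨hxI, h⟩
      have hxj : x.1 ∉ H x.2 (π x.2 j) := fun h => hx2 ⟨hxI, h⟩
      obtain ⟨c1, hc1⟩ := hsing i x hxI hxi
      obtain ⟨c2, hc2⟩ := hsing j x hxI hxj
      left
      rw [hc1, hc2, Set.ncard_singleton, Set.ncard_singleton]
    · -- x in a layer outside I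
      have hdistrib : F.neighborSet x ∩ (S i ∪ S j)
          = (F.neighborSet x ∩ S i) ∪ (F.neighborSet x ∩ S j) :=
        Set.inter_union_distrib_left _ _ _
      rcases eq_or_ne m0 i with rfl | hm0i
      · right; left
        rw [hdistrib, hfull m0 x hxI hm0,
          hempty j x hxI (fun h => hHdisj x.2 hij hm0 h), Set.union_empty]
      rcases eq_or_ne m0 j with rfl | hm0j
      · right; right
        rw [hdistrib, hfull m0 x hxI hm0,
          hempty i x hxI (fun h => hHdisj x.2 (Ne.symm hm0i) h hm0),
          Set.empty_union]
      · left
        rw [hempty i x hxI (fun h => hHdisj x.2 (Ne.symm hm0i) h hm0),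
          hempty j x hxI (fun h => hHdisj x.2 (Ne.symm hm0j) h hm0)]
end

section
/- The dodecahedral graph (on 20 vertices, 3-regular, diameter 5) admits a partition of its vertex set into ten perfect 2-codes of size 2, where a perfect 2-code is a set of vertices whose balls of radius 2 partition the vertex set. -/
/-- The edge list of the dodecahedral graph (1-skeleton of the regular dodecahedron):
outer pentagon `0`–`4`, second ring `5`–`9`, third ring `10`–`14`, inner pentagon `15`–`19`. -/
def dodEdges : List (ℕ × ℕ) :=
  [(0,1),(1,2),(2,3),(3,4),(4,0),
   (0,5),(1,6),(2,7),(3,8),(4,9),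
   (5,10),(5,11),(6,11),(6,12),(7,12),(7,13),(8,13),(8,14),(9,14),(9,10),
   (10,15),(11,16),(12,17),(13,18),(14,19),
   (15,16),(16,17),(17,18),(18,19),(19,15)]

/-- The dodecahedral graph. -/
def dodGraph : SimpleGraph (Fin 20) :=
  SimpleGraph.fromRel (fun x y => ((x : ℕ), (y : ℕ)) ∈ dodEdges)

/-- `C` is a perfect 2-code in `G`: the balls of radius 2 centred at the vertices
of `C` partition the vertex set. -/
def IsPerfectTwoCode {V : Type*} (G : SimpleGraph V) (C : Set V) : Prop :=
  ∀ v, ∃! c, c ∈ C ∧ G.dist c v ≤ 2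


set_option maxRecDepth 4000

instance : DecidableRel dodGraph.Adj := fun x y =>
  inferInstanceAs (Decidable (x ≠ y ∧ (((x:ℕ),(y:ℕ)) ∈ dodEdges ∨ ((y:ℕ),(x:ℕ)) ∈ dodEdges)))

def stepL (s : List (Fin 20)) : List (Fin 20) :=
  (List.finRange 20).filter (fun v => v ∈ s || s.any (fun w => decide (dodGraph.Adj w v)))

def ballL (n : ℕ) (u : Fin 20) : List (Fin 20) := stepL^[n] [u]

lemma mem_stepL {s : List (Fin 20)} {v : Fin 20} :
    v ∈ stepL s ↔ v ∈ s ∨ ∃ w ∈ s, dodGraph.Adj w v := by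
  simp [stepL, List.mem_filter, List.any_eq_true]

lemma ballL_succ (n : ℕ) (u : Fin 20) : ballL (n+1) u = stepL (ballL n u) :=
  Function.iterate_succ_apply' _ _ _

lemma self_mem_ballL (n : ℕ) (u : Fin 20) : u ∈ ballL n u := by
  induction n with
  | zero => simp [ballL]
  | succ n ih => rw [ballL_succ]; exact mem_stepL.mpr (Or.inl ih)

lemma ballL_of_walk : ∀ (n : ℕ) (v u : Fin 20) (p : dodGraph.Walk v u),
    p.length ≤ n → v ∈ ballL n u := by
  intro n
  induction n with
  | zero =>
    intro v u p hp
    cases p with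
    | nil => simp [ballL]
    | cons h q => simp at hp
  | succ n ih =>
    intro v u p hp
    cases p with
    | nil => exact self_mem_ballL _ _
    | cons h q =>
      rw [ballL_succ]
      refine mem_stepL.mpr (Or.inr ⟨_, ih _ _ q (by simpa using hp), h.symm⟩)

lemma walk_of_ballL : ∀ (n : ℕ) (u v : Fin 20), v ∈ ballL n u →
    ∃ p : dodGraph.Walk u v, p.length ≤ n := by
  intro n
  induction n with
  | zero =>
    intro u v hv
    simp only [ballL, Function.iterate_zero, id, List.mem_singleton] at hv
    subst hv; exact ⟨.nil, by simp⟩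
  | succ n ih =>
    intro u v hv
    rw [ballL_succ] at hv
    rcases mem_stepL.mp hv with h | ⟨w, hw, hadj⟩
    · obtain ⟨p, hp⟩ := ih u v h
      exact ⟨p, hp.trans (Nat.le_succ n)⟩
    · obtain ⟨p, hp⟩ := ih u w hw
      exact ⟨p.concat hadj, by rw [SimpleGraph.Walk.length_concat]; omega⟩

set_option maxHeartbeats 1000000 in
lemma ball5 : ∀ u v : Fin 20, v ∈ ballL 5 u := by decide

lemma dodReach : ∀ u v : Fin 20, dodGraph.Reachable u v := fun u v =>
  ⟨(walk_of_ballL 5 u v (ball5 u v)).choose⟩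

lemma dist_le_iff {n : ℕ} {u v : Fin 20} :
    dodGraph.dist u v ≤ n ↔ v ∈ ballL n u := by
  constructor
  · intro h
    obtain ⟨p, hp⟩ := (dodReach u v).exists_walk_length_eq_dist
    exact ballL_of_walk n v u p.reverse (by rw [SimpleGraph.Walk.length_reverse]; omega)
  · intro h
    obtain ⟨p, hp⟩ := walk_of_ballL n u v h
    exact (SimpleGraph.dist_le p).trans hp

def codePairs : Finset (Fin 20 × Fin 20) :=
  {(0,18),(1,19),(2,15),(3,16),(4,17),(5,13),(6,14),(7,10),(8,11),(9,12)}

lemma code_key : ∀ p ∈ codePairs, ∀ v : Fin 20,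
    (v ∈ ballL 2 p.1 ∧ v ∉ ballL 2 p.2) ∨ (v ∉ ballL 2 p.1 ∧ v ∈ ballL 2 p.2) := by decide

theorem stmt9 :
    -- the dodecahedral graph is 3-regular on 20 vertices with diameter 5
    (Nat.card (Fin 20) = 20) ∧
    (∀ v, (dodGraph.neighborSet v).ncard = 3) ∧
    (∀ u w : Fin 20, dodGraph.dist u w ≤ 5) ∧
    (∃ u w : Fin 20, dodGraph.dist u w = 5) ∧
    -- partition into ten perfect 2-codes of size 2
    ∃ P : Set (Set (Fin 20)),
      P.ncard = 10 ∧
      (∀ C ∈ P, IsPerfectTwoCode dodGraph C ∧ C.ncard = 2) ∧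
      (∀ C ∈ P, ∀ C' ∈ P, C ≠ C' → Disjoint C C') ∧
      ⋃ C ∈ P, C = Set.univ := by
  refine ⟨by simp, ?_, ?_, ?_, ?_⟩
  · intro v
    rw [Set.ncard_eq_toFinset_card', ← SimpleGraph.neighborFinset_def]
    revert v
    decide
  · intro u w
    exact dist_le_iff.mpr (ball5 u w)
  · refine ⟨0, 18, ?_⟩
    have h1 : dodGraph.dist 0 18 ≤ 5 := dist_le_iff.mpr (ball5 0 18)
    have h2 : ¬ dodGraph.dist 0 18 ≤ 4 := by
      rw [dist_le_iff]; decide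
    omega
  · refine ⟨(fun p : Fin 20 × Fin 20 => (↑({p.1, p.2} : Finset (Fin 20)) : Set (Fin 20))) ''
      ↑codePairs, ?_, ?_, ?_, ?_⟩
    · rw [Set.ncard_image_of_injOn, Set.ncard_coe_finset]
      · decide
      · intro p hp q hq hpq
        have h := Finset.coe_injective hpq
        revert h
        have hp' : p ∈ codePairs := hp
        have hq' : q ∈ codePairs := hq
        revert hq' hp'
        have : ∀ p ∈ codePairs, ∀ q ∈ codePairs,
            ({p.1, p.2} : Finset (Fin 20)) = {q.1, q.2} → p = q := by decide
        exact fun h1 h2 => this p h1 q h2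
    · rintro C ⟨p, hp, rfl⟩
      have hp' : p ∈ codePairs := hp
      constructor
      · intro v
        rcases code_key p hp' v with ⟨h1, h2⟩ | ⟨h1, h2⟩
        · refine ⟨p.1, ⟨by simp, dist_le_iff.mpr h1⟩, ?_⟩
          rintro y ⟨hy, hd⟩
          simp only [Finset.coe_insert, Finset.coe_singleton, Set.mem_insert_iff,
            Set.mem_singleton_iff] at hy
          rcases hy with rfl | rfl
          · rfl
          · exact absurd (dist_le_iff.mp hd) h2
        · refine ⟨p.2, ⟨by simp, dist_le_iff.mpr h2⟩, ?_⟩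
          rintro y ⟨hy, hd⟩
          simp only [Finset.coe_insert, Finset.coe_singleton, Set.mem_insert_iff,
            Set.mem_singleton_iff] at hy
          rcases hy with rfl | rfl
          · exact absurd (dist_le_iff.mp hd) h1
          · rfl
      · rw [Set.ncard_coe_finset]
        revert hp'
        have : ∀ p ∈ codePairs, ({p.1, p.2} : Finset (Fin 20)).card = 2 := by decide
        exact this p
    · rintro C ⟨p, hp, rfl⟩ C' ⟨q, hq, rfl⟩ hne
      rw [Finset.disjoint_coe]
      have hp' : p ∈ codePairs := hp
      have hq' : q ∈ codePairs := hq
      have hne' : ({p.1, p.2} : Finset (Fin 20)) ≠ {q.1, q.2} :=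
        fun h => hne (congrArg (fun s : Finset (Fin 20) => (↑s : Set (Fin 20))) h)
      revert hne'
      revert hq' hp'
      have : ∀ p ∈ codePairs, ∀ q ∈ codePairs,
          ({p.1, p.2} : Finset (Fin 20)) ≠ {q.1, q.2} →
          Disjoint ({p.1, p.2} : Finset (Fin 20)) {q.1, q.2} := by decide
      exact fun h1 h2 => this p h1 q h2
    · ext v
      simp only [Set.mem_iUnion, Set.mem_univ, iff_true, Set.mem_image,
        Finset.mem_coe, exists_prop]
      have : ∃ p ∈ codePairs, v ∈ ({p.1, p.2} : Finset (Fin 20)) := by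
        revert v; decide
      obtain ⟨p, hp, hv⟩ := this
      exact ⟨↑({p.1, p.2} : Finset (Fin 20)), ⟨p, hp, rfl⟩, hv⟩
end

section
/- Let I be the ideal of the Eisenstein integers Z[ω] generated by 2 − ω (an element of norm 7). Then in the Cayley graph of (Z[ω], +) with connection set the six units {±1, ±ω, ±ω²} (the triangular grid), the set I is a perfect 1-code: every Eisenstein integer not in I is at distance exactly one from a unique element of I, and no two distinct elements of I are adjacent. Consequently the seven cosets of I partition the grid into seven perfect 1-codes. -/
/-!
The ring map `ℤ[ω] → ZMod 7` sending `ω` to `2` (a root of `X² + X + 1` mod 7) has kernel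
`I = (2 − ω)`: since `ω ≡ 2 mod I`, every element is congruent to an integer, and
`7 = (2 − ω)(3 + ω)`. It sends the closed neighbourhood `{0, ±1, ±ω, ±ω²}` of `0` onto the seven
residues `0, ±1, ±2, ±4`. For the kernel `K` of any homomorphism `f` with this property, a vertex `v`
has exactly one closed neighbour in `K`, namely `v + t` with `t` the neighbour of `0` such that
`f t = -f v`. Translations are automorphisms of a Cayley graph, so the cosets of `I` are perfect
codes too.
-/

open Polynomial

/-- The Eisenstein integers `ℤ[ω]`, where `ω² + ω + 1 = 0`. -/
noncomputable abbrev Eisenstein : Type := AdjoinRoot (X ^ 2 + X + 1 : ℤ[X])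

/-- The primitive cube root of unity `ω` in `ℤ[ω]`. -/
noncomputable def eisω : Eisenstein := AdjoinRoot.root _

/-- The triangular grid: the Cayley graph on the additive group of the
Eisenstein integers with connection set the six units `{±1, ±ω, ±ω²}`. -/
noncomputable def triGrid : SimpleGraph Eisenstein :=
  SimpleGraph.fromRel (fun x y =>
    x - y ∈ ({1, -1, eisω, -eisω, eisω ^ 2, -eisω ^ 2} : Set Eisenstein))

/-- The ideal of the Eisenstein integers generated by `2 − ω`. -/
noncomputable def eisI : Ideal Eisenstein := Ideal.span {2 - eisω}

open Pointwise SimpleGraph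

section PerfectCode

variable {V W : Type*} {G : SimpleGraph V} {H : SimpleGraph W} {C : Set V}

theorem IsPerfectOneCode.image_iso (hC : IsPerfectOneCode G C) (φ : G ≃g H) :
    IsPerfectOneCode H (φ '' C) := fun w =>
  (φ.toEquiv.existsUnique_congr' fun _ => and_congr Set.mem_image_equiv.symm
    (or_congr φ.symm.injective.eq_iff φ.symm.map_adj_iff)).mp (hC (φ.symm w))

end PerfectCode

section AddCayley

variable {G A : Type*} [AddGroup G] [AddGroup A] {S : Set G}

theorem eq_or_addCayley_adj_iff (hS : -S = S) (c v : G) :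
    c = v ∨ (addCayley S).Adj c v ↔ -v + c ∈ insert 0 S := by
  have hsymm : -c + v ∈ S ↔ -v + c ∈ S := by
    rw [show -c + v = -(-v + c) by simp, ← Set.mem_neg, hS]
  rw [addCayley_adj, hsymm, or_self, Set.mem_insert_iff, neg_add_eq_zero, eq_comm (a := v)]
  by_cases hcv : c = v <;> simp [hcv]

theorem isPerfectOneCode_addCayley_ker (hS : -S = S) (f : G →+ A)
    (hf : Set.BijOn f (insert 0 S) Set.univ) :
    IsPerfectOneCode (addCayley S) (f.ker : Set G) := by
  intro v
  simp only [eq_or_addCayley_adj_iff hS, SetLike.mem_coe, AddMonoidHom.mem_ker]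
  obtain ⟨t, ht, hft⟩ := hf.surjOn (Set.mem_univ (-f v))
  refine ⟨v + t, ⟨by simp [hft], by simpa using ht⟩, ?_⟩
  rintro c ⟨hc, hcv⟩
  have hct : -v + c = t := hf.injOn hcv ht (by simp [hc, hft])
  rw [← hct, add_neg_cancel_left]

theorem IsPerfectOneCode.image_add_left {C : Set G} (hC : IsPerfectOneCode (addCayley S) C)
    (w : G) : IsPerfectOneCode (addCayley S) ((w + ·) '' C) :=
  hC.image_iso ⟨Equiv.addLeft w, addCayley_adj_add_iff_right⟩

end AddCayley

theorem eisω_sq_add_eisω_add_one : eisω ^ 2 + eisω + 1 = 0 := by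
  have h := AdjoinRoot.eval₂_root (X ^ 2 + X + 1 : ℤ[X])
  rwa [eval₂_add, eval₂_add, eval₂_pow, eval₂_X, eval₂_one] at h

def eisUnits : Set Eisenstein := {1, -1, eisω, -eisω, eisω ^ 2, -eisω ^ 2}

theorem triGrid_eq_addCayley : triGrid = addCayley eisUnits := by
  ext x y
  rw [triGrid, fromRel_adj, addCayley_adj, sub_eq_neg_add, sub_eq_neg_add, or_comm]
  rfl

theorem neg_eisUnits : -eisUnits = eisUnits := by
  ext x
  simp only [eisUnits, Set.mem_neg, Set.mem_insert_iff, Set.mem_singleton_iff, neg_eq_iff_eq_neg,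
    neg_neg]
  tauto

noncomputable def eisToZMod7 : Eisenstein →+* ZMod 7 :=
  AdjoinRoot.lift (Int.castRingHom (ZMod 7)) 2 (by simp; decide)

theorem eisToZMod7_eisω : eisToZMod7 eisω = 2 := AdjoinRoot.lift_root _

theorem exists_intCast_sub_mem_eisI (x : Eisenstein) : ∃ n : ℤ, x - n ∈ eisI := by
  induction x using AdjoinRoot.induction_on with
  | ih p =>
    obtain ⟨q, hq⟩ := X_sub_C_dvd_sub_C_eval (a := 2) (p := p)
    refine ⟨p.eval 2, Ideal.mem_span_singleton'.mpr ⟨-AdjoinRoot.mk _ q, ?_⟩⟩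
    have hmk := congrArg (AdjoinRoot.mk (X ^ 2 + X + 1 : ℤ[X])) hq
    simp only [map_sub, map_mul, AdjoinRoot.mk_X, AdjoinRoot.mk_C, map_ofNat] at hmk
    rw [eisω, ← eq_intCast (AdjoinRoot.of _), hmk]
    ring

theorem seven_mem_eisI : (7 : Eisenstein) ∈ eisI :=
  Ideal.mem_span_singleton'.mpr ⟨3 + eisω, by linear_combination -eisω_sq_add_eisω_add_one⟩

theorem ker_eisToZMod7 : RingHom.ker eisToZMod7 = eisI := by
  have hle : eisI ≤ RingHom.ker eisToZMod7 := by
    rw [eisI, Ideal.span_singleton_le_iff_mem, RingHom.mem_ker, map_sub, map_ofNat,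
      eisToZMod7_eisω]
    exact sub_self _
  refine le_antisymm (fun x hx => ?_) hle
  obtain ⟨n, hn⟩ := exists_intCast_sub_mem_eisI x
  have h7 : (7 : ℤ) ∣ n := by
    have hnker := hle hn
    rw [RingHom.mem_ker, map_sub, RingHom.mem_ker.mp hx, map_intCast, zero_sub, neg_eq_zero,
      ZMod.intCast_zmod_eq_zero_iff_dvd] at hnker
    exact_mod_cast hnker
  obtain ⟨k, rfl⟩ := h7
  have hn7 : ((7 * k : ℤ) : Eisenstein) ∈ eisI := by
    push_cast
    exact eisI.mul_mem_right _ seven_mem_eisI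
  simpa using eisI.add_mem hn hn7

theorem bijOn_eisToZMod7 : Set.BijOn eisToZMod7 (insert 0 eisUnits) Set.univ := by
  have hω2 : eisToZMod7 (eisω ^ 2) = 4 := by rw [map_pow, eisToZMod7_eisω]; rfl
  refine ⟨Set.mapsTo_univ _ _, ?_, fun z _ => ?_⟩
  · simp only [Set.InjOn, eisUnits, Set.mem_insert_iff, Set.mem_singleton_iff]
    rintro x hx y hy hxy
    rcases hx with rfl | rfl | rfl | rfl | rfl | rfl | rfl <;>
      rcases hy with rfl | rfl | rfl | rfl | rfl | rfl | rfl <;>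
      first
      | rfl
      | simp only [map_zero, map_one, map_neg, eisToZMod7_eisω, hω2] at hxy
        exact absurd hxy (by decide)
  · simp only [eisUnits, Set.image_insert_eq, Set.image_singleton, map_zero, map_one, map_neg,
      eisToZMod7_eisω, hω2, Set.mem_insert_iff, Set.mem_singleton_iff]
    revert z
    decide

theorem isPerfectOneCode_eisI :
    IsPerfectOneCode (addCayley eisUnits) (eisI : Set Eisenstein) := by
  rw [← ker_eisToZMod7]
  exact isPerfectOneCode_addCayley_ker neg_eisUnits eisToZMod7.toAddMonoidHom bijOn_eisToZMod7

theorem card_quotient_eisI : Nat.card (Eisenstein ⧸ eisI) = 7 := by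
  rw [← ker_eisToZMod7, Nat.card_congr (RingHom.quotientKerEquivOfSurjective
    (f := eisToZMod7) fun z => ⟨z.val, by simp⟩).toEquiv, Nat.card_zmod]

theorem stmt12 :
    -- `2 − ω` has norm 7
    ((2 : ℤ) ^ 2 + (-1 : ℤ) ^ 2 - 2 * (-1) = 7) ∧
    -- the ideal `I = (2 − ω)` is a perfect 1-code in the triangular grid
    IsPerfectOneCode triGrid (eisI : Set Eisenstein) ∧
    -- hence every coset of `I` is a perfect 1-code, and there are seven cosets
    (∀ w : Eisenstein,
      IsPerfectOneCode triGrid ((w + ·) '' (eisI : Set Eisenstein))) ∧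
    Nat.card (Eisenstein ⧸ eisI) = 7 := by
  rw [triGrid_eq_addCayley]
  exact ⟨by norm_num, isPerfectOneCode_eisI, isPerfectOneCode_eisI.image_add_left,
    card_quotient_eisI⟩
end

section
/- For any even positive integer m and any integer n ≥ m + 1, the subgroup of Z^n generated by all {1, −1, 0}-vectors of weight m whose coordinate sum is zero equals the set of all integer vectors in Z^n whose coordinate sum is zero. -/
/-!
A vector with coordinate sum zero is an integer combination of the differences `eᵢ - eⱼ`, and
each such difference is a difference of two generators: with `m = 2k`, choose disjoint sets
`A`, `B` of sizes `k - 1` and `k` avoiding `i` and `j` (there is room since `n - 2 ≥ m - 1`);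
then `(1_{A ∪ {i}} - 1_B) - (1_{A ∪ {j}} - 1_B) = eᵢ - eⱼ`.
-/

/-- The set of `{1,−1,0}`-vectors in `ℤⁿ` of weight `m` (i.e. with exactly `m`
nonzero entries) whose coordinate sum is zero. -/
def zeroSumVectors (n m : ℕ) : Set (Fin n → ℤ) :=
  {x | (∀ i, x i = 1 ∨ x i = -1 ∨ x i = 0) ∧
    (Finset.univ.filter fun i => x i ≠ 0).card = m ∧ (∑ i, x i) = 0}

open Finset

def sumAddMonoidHom (ι : Type*) [Fintype ι] : (ι → ℤ) →+ ℤ where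
  toFun x := ∑ i, x i
  map_zero' := sum_const_zero
  map_add' _ _ := sum_add_distrib

section ZeroSum

variable {ι : Type*} [Fintype ι] [DecidableEq ι]

lemma sum_smul_single_sub_single {x : ι → ℤ} (hx : ∑ i, x i = 0) (j : ι) :
    ∑ i, x i • (Pi.single i 1 - Pi.single j 1 : ι → ℤ) = x := by
  simp only [smul_sub, sum_sub_distrib, ← sum_smul, hx, zero_smul, sub_zero]
  conv_rhs => rw [← univ_sum_single x]
  refine sum_congr rfl fun i _ => ?_
  rw [← Pi.single_smul', smul_eq_mul, mul_one]

lemma ker_sumAddMonoidHom_le {H : AddSubgroup (ι → ℤ)} (j : ι)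
    (hH : ∀ i, i ≠ j → (Pi.single i 1 - Pi.single j 1 : ι → ℤ) ∈ H) :
    (sumAddMonoidHom ι).ker ≤ H := by
  intro x hx
  rw [← sum_smul_single_sub_single hx j]
  refine H.sum_mem fun i _ => H.zsmul_mem ?_ _
  obtain rfl | hij := eq_or_ne i j
  · simp
  · exact hH i hij

end ZeroSum

section SignedIndicator

variable {ι : Type*} [DecidableEq ι]

def signedIndicator (A B : Finset ι) : ι → ℤ :=
  fun x => (if x ∈ A then 1 else 0) - if x ∈ B then 1 else 0

lemma signedIndicator_insert_sub_insert {A : Finset ι} {i j : ι} (hi : i ∉ A) (hj : j ∉ A)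
    (B : Finset ι) :
    signedIndicator (insert i A) B - signedIndicator (insert j A) B =
      Pi.single i 1 - Pi.single j 1 := by
  ext x
  by_cases hx : x ∈ A
  · have hxi : x ≠ i := by rintro rfl; exact hi hx
    have hxj : x ≠ j := by rintro rfl; exact hj hx
    simp [signedIndicator, hx, hxi, hxj]
  · simp [signedIndicator, Pi.single_apply, hx]

end SignedIndicator

lemma Finset.exists_disjoint_subsets_card_eq {α : Type*} [DecidableEq α] {s : Finset α} {a b : ℕ}
    (h : a + b ≤ #s) : ∃ A ⊆ s, ∃ B ⊆ s, Disjoint A B ∧ #A = a ∧ #B = b := by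
  obtain ⟨B, hBs, hB⟩ := exists_subset_card_eq (show b ≤ #s by omega)
  obtain ⟨A, hA, hA'⟩ := exists_subset_card_eq (show a ≤ #(s \ B) by
    rw [card_sdiff_of_subset hBs]; omega)
  exact ⟨A, hA.trans sdiff_subset, B, hBs, disjoint_of_subset_left hA sdiff_disjoint, hA', hB⟩

lemma signedIndicator_mem_zeroSumVectors {n : ℕ} {A B : Finset (Fin n)} (hAB : Disjoint A B)
    (hcard : #A = #B) : signedIndicator A B ∈ zeroSumVectors n (#A + #B) := by
  refine ⟨fun i => ?_, ?_, ?_⟩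
  · by_cases hA : i ∈ A <;> by_cases hB : i ∈ B <;> simp [signedIndicator, hA, hB]
  · rw [← card_union_of_disjoint hAB]
    congr 1
    ext x
    rw [mem_filter, mem_union]
    have hdisj : x ∈ A → x ∉ B := fun h => Finset.disjoint_left.mp hAB h
    by_cases hA : x ∈ A <;> by_cases hB : x ∈ B <;> simp [signedIndicator, hA, hB] at hdisj ⊢
  · simp [signedIndicator, sum_sub_distrib, hcard]

lemma single_sub_single_mem_closure_zeroSumVectors {n k : ℕ} (hk : 0 < k) (hn : 2 * k + 1 ≤ n)
    {i j : Fin n} (hij : i ≠ j) :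
    (Pi.single i 1 - Pi.single j 1 : Fin n → ℤ) ∈ AddSubgroup.closure (zeroSumVectors n (2 * k)) := by
  have hroom : (k - 1) + k ≤ #(univ \ {i, j}) := by
    rw [card_sdiff_of_subset (subset_univ _), card_univ, Fintype.card_fin, card_pair hij]
    omega
  obtain ⟨A, hA, B, hB, hAB, hAk, hBk⟩ := exists_disjoint_subsets_card_eq hroom
  have hiA : i ∉ A := fun h => by simpa using hA h
  have hjA : j ∉ A := fun h => by simpa using hA h
  have hiB : i ∉ B := fun h => by simpa using hB h
  have hjB : j ∉ B := fun h => by simpa using hB h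
  have generator {l : Fin n} (hl : l ∉ A) (hlB : l ∉ B) :
      signedIndicator (insert l A) B ∈ AddSubgroup.closure (zeroSumVectors n (2 * k)) := by
    apply AddSubgroup.subset_closure
    have hcard : #(insert l A) = #B := by rw [card_insert_of_notMem hl, hAk]; omega
    have := signedIndicator_mem_zeroSumVectors (disjoint_insert_left.mpr ⟨hlB, hAB⟩) hcard
    rwa [hcard, hBk, ← two_mul] at this
  rw [← signedIndicator_insert_sub_insert hiA hjA B]
  exact sub_mem (generator hiA hiB) (generator hjA hjB)

theorem stmt14 (n m : ℕ) (hm : Even m) (hm0 : 0 < m) (hn : m + 1 ≤ n) :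
    (AddSubgroup.closure (zeroSumVectors n m) : Set (Fin n → ℤ)) =
      {x | (∑ i, x i) = 0} := by
  obtain ⟨k, rfl⟩ := hm
  rw [← two_mul] at hn ⊢
  suffices AddSubgroup.closure (zeroSumVectors n (2 * k)) = (sumAddMonoidHom (Fin n)).ker by
    rw [this]; rfl
  refine le_antisymm ((AddSubgroup.closure_le _).mpr fun x hx => hx.2.2) ?_
  exact ker_sumAddMonoidHom_le ⟨0, by omega⟩ fun i hi =>
    single_sub_single_mem_closure_zeroSumVectors (by omega) hn hi
end

section
/- For any even positive integer m and any integer n ≥ m + 1, the subgroup of Z^n generated by all {1, −1, 0}-vectors of weight m equals the set of all integer vectors in Z^n whose coordinate sum is even. -/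
/-!
Every entry `±1` is odd, so a weight-`m` vector has coordinate sum `≡ m ≡ 0 (mod 2)`.
Conversely, if `S` is a set of `m - 1` coordinates avoiding `i` and `j` (this needs `n ≥ m + 1`),
then `eᵢ + 1_S`, `eⱼ + 1_S` and `eᵢ - 1_S` all have weight `m`; their differences and sums give
`eᵢ - eⱼ` and `2 eᵢ`, and these generate the lattice of integer vectors with even coordinate sum.
-/

/-- The set of `{1,−1,0}`-vectors in `ℤⁿ` of weight `m` (i.e. with exactly `m`
nonzero entries). -/
def weightVectors (n m : ℕ) : Set (Fin n → ℤ) :=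
  {x | (∀ i, x i = 1 ∨ x i = -1 ∨ x i = 0) ∧
    (Finset.univ.filter fun i => x i ≠ 0).card = m}

open Finset

def evenSumSubgroup (ι : Type*) [Fintype ι] : AddSubgroup (ι → ℤ) where
  carrier := {x | Even (∑ i, x i)}
  add_mem' ha hb := by simpa only [Set.mem_ofPred_eq, Pi.add_apply, sum_add_distrib] using ha.add hb
  zero_mem' := by simp
  neg_mem' ha := by simpa only [Set.mem_ofPred_eq, Pi.neg_apply, sum_neg_distrib, even_neg] using ha

section EvenSum

variable {ι : Type*} [Fintype ι]

theorem even_sum_iff_even_card_ne_zero {x : ι → ℤ} (hx : ∀ i, x i = 1 ∨ x i = -1 ∨ x i = 0) :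
    Even (∑ i, x i) ↔ Even #{i | x i ≠ 0} := by
  have hdiff : ∑ i, x i - (#{i | x i ≠ 0} : ℤ) = ∑ i, (x i - if x i ≠ 0 then 1 else 0) := by
    rw [sum_sub_distrib, sum_boole]
  have heven : Even (∑ i, x i - (#{i | x i ≠ 0} : ℤ)) :=
    hdiff ▸ even_sum _ fun i _ => by rcases hx i with h | h | h <;> simp [h]
  rw [← Int.even_coe_nat]
  exact Int.even_sub.1 heven

theorem mem_of_even_sum [DecidableEq ι] {G : AddSubgroup (ι → ℤ)} (i₀ : ι)
    (h₂ : Pi.single i₀ 2 ∈ G) (hsub : ∀ i, Pi.single i 1 - Pi.single i₀ 1 ∈ G) {x : ι → ℤ} (hx : Even (∑ i, x i)) :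
    x ∈ G := by
  obtain ⟨c, hc⟩ := hx
  have hsingle : ∀ i, x i • (Pi.single i 1 : ι → ℤ) = Pi.single i (x i) := fun i => by
    rw [← Pi.single_smul, smul_eq_mul, mul_one]
  have hdecomp : x = ∑ i, x i • (Pi.single i 1 - Pi.single i₀ 1) + c • Pi.single i₀ 2 := by
    simp only [smul_sub, sum_sub_distrib, ← sum_smul, hsingle, univ_sum_single, hc]
    ext k
    by_cases hk : k = i₀ <;> simp [hk, mul_two]
  rw [hdecomp]
  exact add_mem (sum_mem fun i _ => zsmul_mem (hsub i) _) (zsmul_mem h₂ _)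

end EvenSum

theorem Finset.exists_card_eq_disjoint {α : Type*} [Fintype α] [DecidableEq α] (s : Finset α)
    {k : ℕ} (hk : k + #s ≤ Fintype.card α) : ∃ t : Finset α, Disjoint t s ∧ #t = k := by
  obtain ⟨t, hts, htk⟩ := sᶜ.exists_subset_card_eq (n := k) (by rw [card_compl]; omega)
  exact ⟨t, subset_compl_iff_disjoint_right.1 hts, htk⟩

section WeightVectors

variable {n m : ℕ}

theorem weightVectors_subset_evenSumSubgroup (hm : Even m) :
    weightVectors n m ⊆ evenSumSubgroup (Fin n) :=
  fun _ hx => (even_sum_iff_even_card_ne_zero hx.1).2 (hx.2 ▸ hm)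

theorem single_add_signed_indicator_mem_weightVectors {i : Fin n} {S : Finset (Fin n)}
    (hi : i ∉ S) (hS : #S + 1 = m) {ε : ℤ} (hε : ε = 1 ∨ ε = -1) :
    Pi.single i 1 + (fun k => if k ∈ S then ε else 0) ∈ weightVectors n m := by
  have hε0 : ε ≠ 0 := by rcases hε with rfl | rfl <;> decide
  have hval : ∀ k, (Pi.single i 1 + fun k => if k ∈ S then ε else 0 : Fin n → ℤ) k =
      if k = i then 1 else if k ∈ S then ε else 0 := fun k => by
    by_cases hk : k = i
    · subst hk; simp [hi]
    · simp [hk]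
  refine ⟨fun k => ?_, ?_⟩
  · rw [hval]; split_ifs <;> tauto
  · rw [← hS, ← card_insert_of_notMem hi]
    congr 1
    ext k
    rw [mem_filter, hval, mem_insert]
    split_ifs <;> simp_all

theorem single_sub_single_mem_closure_weightVectors (hm0 : 0 < m) (hn : m + 1 ≤ n)
    (i j : Fin n) : Pi.single i 1 - Pi.single j 1 ∈ AddSubgroup.closure (weightVectors n m) := by
  rcases eq_or_ne i j with rfl | hij
  · simp
  obtain ⟨S, hS, hScard⟩ := ({i, j} : Finset (Fin n)).exists_card_eq_disjoint (k := m - 1)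
    (by rw [card_pair hij, Fintype.card_fin]; omega)
  have hiS : i ∉ S := disjoint_right.1 hS (mem_insert_self i _)
  have hjS : j ∉ S := disjoint_right.1 hS (mem_insert_of_mem (mem_singleton_self j))
  rw [← add_sub_add_right_eq_sub _ _ fun k => if k ∈ S then (1 : ℤ) else 0]
  exact sub_mem
    (AddSubgroup.subset_closure
      (single_add_signed_indicator_mem_weightVectors hiS (by omega) (Or.inl rfl)))
    (AddSubgroup.subset_closure
      (single_add_signed_indicator_mem_weightVectors hjS (by omega) (Or.inl rfl)))

theorem single_two_mem_closure_weightVectors (hm0 : 0 < m) (hn : m ≤ n) (i : Fin n) :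
    Pi.single i 2 ∈ AddSubgroup.closure (weightVectors n m) := by
  obtain ⟨S, hS, hScard⟩ := ({i} : Finset (Fin n)).exists_card_eq_disjoint (k := m - 1)
    (by rw [card_singleton, Fintype.card_fin]; omega)
  have hiS : i ∉ S := disjoint_singleton_right.1 hS
  have hsum : (Pi.single i 2 : Fin n → ℤ) =
      (Pi.single i 1 + fun k => if k ∈ S then 1 else 0) +
        (Pi.single i 1 + fun k => if k ∈ S then -1 else 0) := by
    ext k
    by_cases hk : k = i
    · subst hk; simp [hiS]
    · simp only [Pi.add_apply, Pi.single_eq_of_ne hk]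
      split_ifs <;> norm_num
  rw [hsum]
  exact add_mem
    (AddSubgroup.subset_closure
      (single_add_signed_indicator_mem_weightVectors hiS (by omega) (Or.inl rfl)))
    (AddSubgroup.subset_closure
      (single_add_signed_indicator_mem_weightVectors hiS (by omega) (Or.inr rfl)))

end WeightVectors

theorem stmt15 (n m : ℕ) (hm : Even m) (hm0 : 0 < m) (hn : m + 1 ≤ n) :
    (AddSubgroup.closure (weightVectors n m) : Set (Fin n → ℤ)) =
      {x | Even (∑ i, x i)} := by
  suffices AddSubgroup.closure (weightVectors n m) = evenSumSubgroup (Fin n) by rw [this]; rfl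
  refine le_antisymm ((AddSubgroup.closure_le _).2 (weightVectors_subset_evenSumSubgroup hm))
    fun x hx => ?_
  let i₀ : Fin n := ⟨0, by omega⟩
  exact mem_of_even_sum i₀ (single_two_mem_closure_weightVectors hm0 (by omega) i₀)
    (fun i => single_sub_single_mem_closure_weightVectors hm0 hn i i₀) hx
end

section
/- For an even positive integer m and n ≥ m+1, let S be the set of n-dimensional {1,−1,0}-vectors of weight m, and let Γ be the Cayley graph on the group of integer vectors with even coordinate sum with connection set S. Then Γ is edge-regular with parameters (k₂, λ₂) where k₂ = 2^m · C(n, m) and λ₂ = C(m, m/2) · C(n−m, m/2) · 2^{m/2}: every vertex has exactly k₂ neighbours and every pair of adjacent vertices has exactly λ₂ common neighbours. -/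
/-- The group of integer vectors in `ℤⁿ` with even coordinate sum. -/
abbrev evenSum (n : ℕ) : Type := {x : Fin n → ℤ // Even (∑ i, x i)}

/-- The Cayley graph on the group of even-coordinate-sum integer vectors with
connection set the `{1,−1,0}`-vectors of weight `m`. -/
def cayEven (n m : ℕ) : SimpleGraph (evenSum n) :=
  SimpleGraph.fromRel (fun x y => (x : Fin n → ℤ) - (y : Fin n → ℤ) ∈ weightVectors n m)

open Finset

namespace WeightVectors

variable {n m : ℕ} {s t : Fin n → ℤ}

def supp (x : Fin n → ℤ) : Finset (Fin n) := univ.filter fun i => x i ≠ 0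

@[simp] lemma mem_supp {x : Fin n → ℤ} {i : Fin n} : i ∈ supp x ↔ x i ≠ 0 := by
  simp [supp]

lemma card_supp_of_mem_weightVectors (hs : s ∈ weightVectors n m) : #(supp s) = m :=
  hs.2

lemma eq_one_or_eq_neg_one_of_mem_supp (hs : s ∈ weightVectors n m) {i : Fin n}
    (hi : i ∈ supp s) : s i = 1 ∨ s i = -1 := by
  have := mem_supp.mp hi
  rcases hs.1 i with h | h | h <;> tauto

lemma neg_mem_weightVectors (ht : t ∈ weightVectors n m) : -t ∈ weightVectors n m := by
  refine ⟨fun i => ?_, by simpa using ht.2⟩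
  rcases ht.1 i with h | h | h <;> simp [h]

lemma zero_notMem_weightVectors (hm0 : 0 < m) : (0 : Fin n → ℤ) ∉ weightVectors n m :=
  fun h => hm0.ne (by simpa [supp] using h.2)

lemma even_sum_of_mem_weightVectors (hm : Even m) (ht : t ∈ weightVectors n m) :
    Even (∑ i, t i) := by
  have hdvd : (2 : ℤ) ∣ ∑ i, (t i - if t i ≠ 0 then 1 else 0) :=
    dvd_sum fun i _ => by rcases ht.1 i with h | h | h <;> simp [h]
  rw [sum_sub_distrib, sum_boole, ht.2] at hdvd
  simpa using (even_iff_two_dvd.mpr hdvd).add (hm.natCast (α := ℤ))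

def signPattern (f : Fin n → ℤ) (B C : Finset (Fin n)) : Finset (Fin n → ℤ) :=
  Fintype.piFinset fun i => if i ∈ B then {f i} else if i ∈ C then {1, -1} else {0}

section signPattern

variable {f x : Fin n → ℤ} {B C : Finset (Fin n)}

lemma mem_signPattern : x ∈ signPattern f B C ↔ ∀ i, x i ∈
    (if i ∈ B then ({f i} : Finset ℤ) else if i ∈ C then {1, -1} else {0}) :=
  Fintype.mem_piFinset

lemma card_signPattern (f : Fin n → ℤ) (h : Disjoint B C) :
    #(signPattern f B C) = 2 ^ #C := by
  have hcard (i : Fin n) :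
      #(if i ∈ B then ({f i} : Finset ℤ) else if i ∈ C then {1, -1} else {0}) =
        if i ∈ C then 2 else 1 := by
    by_cases hB : i ∈ B
    · simp [hB, disjoint_left.mp h hB]
    · by_cases hC : i ∈ C <;> simp [hB, hC]
  rw [signPattern, Fintype.card_piFinset, prod_congr rfl fun i _ => hcard i,
    prod_ite_mem, univ_inter, prod_const]

lemma supp_of_mem_signPattern (hx : x ∈ signPattern f B C) (hf : ∀ i ∈ B, f i ≠ 0) :
    supp x = B ∪ C := by
  ext i
  have hi := mem_signPattern.mp hx i
  split_ifs at hi with hB hC <;> simp only [mem_singleton, mem_insert] at hi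
  · simp [hB, hi, hf i hB]
  · rcases hi with hi | hi <;> simp [hC, hi]
  · simp [hB, hC, hi]

lemma card_supp_of_mem_signPattern (hx : x ∈ signPattern f B C) (hBC : Disjoint B C)
    (hf : ∀ i ∈ B, f i ≠ 0) : #(supp x) = #B + #C := by
  rw [supp_of_mem_signPattern hx hf, card_union_of_disjoint hBC]

lemma mem_weightVectors_of_mem_signPattern (hx : x ∈ signPattern f B C)
    (hBC : Disjoint B C) (hf : ∀ i ∈ B, f i = 1 ∨ f i = -1) :
    x ∈ weightVectors n (#B + #C) := by
  refine ⟨fun i => ?_, ?_⟩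
  · have hi := mem_signPattern.mp hx i
    split_ifs at hi with hB hC <;> simp only [mem_singleton, mem_insert] at hi
    · rcases hf i hB with h | h <;> simp [hi, h]
    · tauto
    · tauto
  · refine card_supp_of_mem_signPattern hx hBC fun i hi => ?_
    rcases hf i hi with h | h <;> simp [h]

lemma mem_signPattern_supp (hx : ∀ i, x i = 1 ∨ x i = -1 ∨ x i = 0) :
    x ∈ signPattern f ∅ (supp x) := by
  refine mem_signPattern.mpr fun i => ?_
  rcases hx i with h | h | h <;> simp [h]

lemma sub_mem_signPattern (hB : B ⊆ supp s) (hC : Disjoint C (supp s))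
    (ht : t ∈ signPattern s B C) : t - s ∈ signPattern (-s) (supp s \ B) C := by
  refine mem_signPattern.mpr fun i => ?_
  have hi := mem_signPattern.mp ht i
  have hCs : i ∈ C → s i = 0 := fun h => by simpa using disjoint_left.mp hC h
  split_ifs at hi with hiB hiC <;> simp only [mem_singleton, mem_insert] at hi
  · have hiC : i ∉ C := fun h => disjoint_left.mp hC h (hB hiB)
    simp [hiB, hiC, hi]
  · simp [hiB, hiC, hCs hiC, hi]
  · by_cases hs : s i = 0 <;> simp [hiB, hiC, hi, hs]

lemma mem_signPattern_of_sub_mem (hs : s ∈ weightVectors n m) (ht : t ∈ weightVectors n m)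
    (hts : t - s ∈ weightVectors n m) :
    t ∈ signPattern s (supp t ∩ supp s) (supp t \ supp s) := by
  refine mem_signPattern.mpr fun i => ?_
  have hsi := hs.1 i
  have hti := ht.1 i
  have htsi : t i - s i = 1 ∨ t i - s i = -1 ∨ t i - s i = 0 := hts.1 i
  by_cases h0 : t i = 0
  · simp [h0]
  by_cases hs0 : s i = 0
  · simp only [mem_inter, mem_sdiff, mem_supp, h0, hs0, ne_eq, not_false_eq_true,
      not_true_eq_false, and_false, and_self, ↓reduceIte, mem_insert, mem_singleton]
    omega
  · simp only [mem_inter, mem_supp, h0, hs0, ne_eq, not_false_eq_true, and_self, ↓reduceIte,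
      mem_singleton]
    -- `s i = ±1` and `t i - s i ∈ {0, ±1}` leave only `t i ∈ {0, s i}`
    omega

lemma card_biUnion_signPattern {ι : Type*} [DecidableEq ι] (P : Finset ι) (f : Fin n → ℤ)
    (B C : ι → Finset (Fin n)) {k : ℕ} (hf : ∀ p ∈ P, ∀ i ∈ B p, f i ≠ 0)
    (hBC : ∀ p ∈ P, Disjoint (B p) (C p)) (hinj : Set.InjOn (fun p => B p ∪ C p) P)
    (hk : ∀ p ∈ P, #(C p) = k) :
    #(P.biUnion fun p => signPattern f (B p) (C p)) = #P * 2 ^ k := by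
  rw [card_biUnion, sum_congr rfl fun p hp => by rw [card_signPattern f (hBC p hp), hk p hp],
    sum_const, smul_eq_mul]
  intro p hp q hq hpq
  refine disjoint_left.mpr fun x hxp hxq => hpq (hinj hp hq ?_)
  simp only [← supp_of_mem_signPattern hxp (hf p hp), ← supp_of_mem_signPattern hxq (hf q hq)]

end signPattern

def weightVectorsFinset (n m : ℕ) : Finset (Fin n → ℤ) :=
  (univ.powersetCard m).biUnion fun A => signPattern 0 ∅ A

lemma coe_weightVectorsFinset : ↑(weightVectorsFinset n m) = weightVectors n m := by
  ext x
  simp only [weightVectorsFinset, coe_biUnion, Set.mem_iUnion, mem_coe, mem_powersetCard,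
    subset_univ, true_and, exists_prop]
  constructor
  · rintro ⟨A, rfl, hx⟩
    simpa using mem_weightVectors_of_mem_signPattern hx (disjoint_empty_left A) (by simp)
  · exact fun hx => ⟨supp x, hx.2, mem_signPattern_supp hx.1⟩

lemma card_weightVectorsFinset : #(weightVectorsFinset n m) = 2 ^ m * n.choose m := by
  rw [weightVectorsFinset, card_biUnion_signPattern _ _ (fun _ => ∅) (fun A => A) (by simp)
    (by simp) (fun A _ B _ h => by simpa using h) (fun A hA => (mem_powersetCard.mp hA).2),
    card_powersetCard, card_univ, Fintype.card_fin, mul_comm]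

def halfAgreeing (m : ℕ) (s : Fin n → ℤ) : Finset (Fin n → ℤ) :=
  ((supp s).powersetCard (m / 2) ×ˢ (supp s)ᶜ.powersetCard (m / 2)).biUnion
    fun p => signPattern s p.1 p.2

lemma mem_weightVectors_of_mem_signPattern_half (hm : Even m) (hs : s ∈ weightVectors n m)
    {B C : Finset (Fin n)} (hB : B ⊆ supp s) (hC : Disjoint C (supp s)) (hBcard : #B = m / 2)
    (hCcard : #C = m / 2) (ht : t ∈ signPattern s B C) :
    t ∈ weightVectors n m ∧ t - s ∈ weightVectors n m := by
  constructor
  · have := mem_weightVectors_of_mem_signPattern ht (disjoint_of_subset_left hB hC.symm)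
      fun i hi => eq_one_or_eq_neg_one_of_mem_supp hs (hB hi)
    rwa [hBcard, hCcard, ← two_mul, Nat.two_mul_div_two_of_even hm] at this
  · have := mem_weightVectors_of_mem_signPattern (sub_mem_signPattern hB hC ht)
      (disjoint_of_subset_left sdiff_subset hC.symm) fun i hi => by
        rcases eq_one_or_eq_neg_one_of_mem_supp hs (mem_sdiff.mp hi).1 with h | h <;> simp [h]
    rwa [card_sdiff_of_subset hB, hBcard, hCcard, card_supp_of_mem_weightVectors hs,
      Nat.sub_add_cancel (Nat.div_le_self m 2)] at this

lemma card_supp_inter_eq_half (hs : s ∈ weightVectors n m) (ht : t ∈ weightVectors n m)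
    (hts : t - s ∈ weightVectors n m) :
    #(supp t ∩ supp s) = m / 2 ∧ #(supp t \ supp s) = m / 2 := by
  have hB : supp t ∩ supp s ⊆ supp s := inter_subset_right
  have hC : Disjoint (supp t \ supp s) (supp s) := sdiff_disjoint
  have hweight_t : #(supp t ∩ supp s) + #(supp t \ supp s) = m :=
    (card_inter_add_card_sdiff _ _).trans (card_supp_of_mem_weightVectors ht)
  have hweight_ts : #(supp s \ (supp t ∩ supp s)) + #(supp t \ supp s) = m :=
    (card_supp_of_mem_signPattern (sub_mem_signPattern hB hC (mem_signPattern_of_sub_mem hs ht hts))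
      (disjoint_of_subset_left sdiff_subset hC.symm)
      fun i hi => by simpa using (mem_sdiff.mp hi).1).symm.trans
      (card_supp_of_mem_weightVectors hts)
  rw [card_sdiff_of_subset hB, card_supp_of_mem_weightVectors hs] at hweight_ts
  have := card_le_card hB
  omega

lemma coe_halfAgreeing (hm : Even m) (hs : s ∈ weightVectors n m) :
    ↑(halfAgreeing m s) = {t | t ∈ weightVectors n m ∧ t - s ∈ weightVectors n m} := by
  ext t
  simp only [halfAgreeing, coe_biUnion, Set.mem_iUnion, mem_coe, mem_product, mem_powersetCard,
    subset_compl_iff_disjoint_right, Set.mem_ofPred_eq, exists_prop, Prod.exists]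
  constructor
  · rintro ⟨B, C, ⟨⟨hB, hBcard⟩, hC, hCcard⟩, ht⟩
    exact mem_weightVectors_of_mem_signPattern_half hm hs hB hC hBcard hCcard ht
  · rintro ⟨ht, hts⟩
    exact ⟨_, _, ⟨⟨inter_subset_right, (card_supp_inter_eq_half hs ht hts).1⟩, sdiff_disjoint,
      (card_supp_inter_eq_half hs ht hts).2⟩, mem_signPattern_of_sub_mem hs ht hts⟩

lemma card_halfAgreeing (hs : s ∈ weightVectors n m) :
    #(halfAgreeing m s) = m.choose (m / 2) * (n - m).choose (m / 2) * 2 ^ (m / 2) := by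
  set P := (supp s).powersetCard (m / 2) ×ˢ (supp s)ᶜ.powersetCard (m / 2)
  have hmem {p} (hp : p ∈ P) : p.1 ⊆ supp s ∧ p.2 ⊆ (supp s)ᶜ := by
    simp only [P, mem_product, mem_powersetCard] at hp
    exact ⟨hp.1.1, hp.2.1⟩
  have hsplit {p} (hp : p ∈ P) : (p.1 ∪ p.2) ∩ supp s = p.1 ∧ (p.1 ∪ p.2) \ supp s = p.2 := by
    obtain ⟨hB, hC⟩ := hmem hp
    have hC' := subset_compl_iff_disjoint_right.mp hC
    rw [union_inter_distrib_right, inter_eq_left.mpr hB, disjoint_iff_inter_eq_empty.mp hC',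
      union_empty, union_sdiff_distrib, sdiff_eq_empty_iff_subset.mpr hB,
      sdiff_eq_self_of_disjoint hC', empty_union]
    exact ⟨rfl, rfl⟩
  rw [halfAgreeing, card_biUnion_signPattern P s Prod.fst Prod.snd
    (fun p hp i hi => mem_supp.mp ((hmem hp).1 hi))
    (fun p hp => disjoint_of_subset_left (hmem hp).1
      (subset_compl_iff_disjoint_right.mp (hmem hp).2).symm)
    (fun p hp q hq (h : p.1 ∪ p.2 = q.1 ∪ q.2) => Prod.ext
      (by rw [← (hsplit hp).1, h, (hsplit hq).1]) (by rw [← (hsplit hp).2, h, (hsplit hq).2]))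
    (fun p hp => (mem_powersetCard.mp (mem_product.mp hp).2).2),
    card_product, card_powersetCard, card_powersetCard, card_compl, Fintype.card_fin,
    card_supp_of_mem_weightVectors hs]

end WeightVectors

namespace CayEven

open WeightVectors

variable {n m : ℕ}

lemma adj_iff (hm0 : 0 < m) {x y : evenSum n} :
    (cayEven n m).Adj x y ↔ (x : Fin n → ℤ) - y ∈ weightVectors n m := by
  rw [cayEven, SimpleGraph.fromRel_adj]
  refine ⟨fun ⟨_, h⟩ => h.elim id fun h => by simpa using neg_mem_weightVectors h,
    fun h => ⟨fun hxy => zero_notMem_weightVectors hm0 (by simpa [hxy] using h), Or.inl h⟩⟩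

lemma sub_injective (x : evenSum n) :
    Function.Injective fun z : evenSum n => (x : Fin n → ℤ) - z :=
  fun _ _ h => Subtype.ext (sub_right_injective h)

lemma ncard_setOf_sub (x : evenSum n) (P : (Fin n → ℤ) → Prop)
    (hP : ∀ t, P t → Even (∑ i, t i)) :
    {z : evenSum n | P (x - z)}.ncard = {t | P t}.ncard := by
  rw [← Set.ncard_image_of_injective _ (sub_injective x)]
  congr 1
  ext t
  refine ⟨fun ⟨z, hz, hzt⟩ => hzt ▸ hz, fun ht => ⟨⟨x - t, ?_⟩, by simpa using ht, by simp⟩⟩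
  simpa [sum_sub_distrib] using x.2.sub (hP t ht)

lemma neighborSet_eq (hm0 : 0 < m) (x : evenSum n) :
    (cayEven n m).neighborSet x = {z : evenSum n | (x : Fin n → ℤ) - z ∈ weightVectors n m} :=
  Set.ext fun _ => adj_iff hm0

lemma commonNeighbors_eq (hm0 : 0 < m) (x y : evenSum n) :
    (cayEven n m).commonNeighbors x y = {z : evenSum n |
      (x : Fin n → ℤ) - z ∈ weightVectors n m ∧
        ((x : Fin n → ℤ) - z) - (x - y) ∈ weightVectors n m} := by
  ext z
  simp only [SimpleGraph.mem_commonNeighbors, adj_iff hm0, sub_sub_sub_cancel_left,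
    Set.mem_ofPred_eq]

end CayEven

open WeightVectors CayEven in
theorem stmt16_general (n m : ℕ) (hm : Even m) (hm0 : 0 < m) :
    (∀ x : evenSum n, ((cayEven n m).neighborSet x).ncard = 2 ^ m * n.choose m) ∧
    (∀ x y : evenSum n, (cayEven n m).Adj x y →
      ((cayEven n m).commonNeighbors x y).ncard =
        m.choose (m / 2) * (n - m).choose (m / 2) * 2 ^ (m / 2)) := by
  refine ⟨fun x => ?_, fun x y hxy => ?_⟩
  · rw [neighborSet_eq hm0, ncard_setOf_sub x (· ∈ weightVectors n m)
      fun _ => even_sum_of_mem_weightVectors hm, Set.ofPred_mem_eq, ← coe_weightVectorsFinset,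
      Set.ncard_coe_finset, card_weightVectorsFinset]
  · have hs := (adj_iff hm0).mp hxy
    rw [commonNeighbors_eq hm0, ncard_setOf_sub x (fun t => t ∈ weightVectors n m ∧
      t - (x - y) ∈ weightVectors n m) fun _ h => even_sum_of_mem_weightVectors hm h.1,
      ← coe_halfAgreeing hm hs, Set.ncard_coe_finset, card_halfAgreeing hs]

theorem stmt16 (n m : ℕ) (hm : Even m) (hm0 : 0 < m) (hn : m + 1 ≤ n) :
    (∀ x : evenSum n, ((cayEven n m).neighborSet x).ncard = 2 ^ m * n.choose m) ∧
    (∀ x y : evenSum n, (cayEven n m).Adj x y →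
      ((cayEven n m).commonNeighbors x y).ncard =
        m.choose (m / 2) * (n - m).choose (m / 2) * 2 ^ (m / 2)) :=
  stmt16_general n m hm hm0
end
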